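/- arXiv:2403.11768 — 7 statements merged into one kernel-verified Lean document; each statement's English description precedes it below -/
import Mathlib

section
/- Let ε ∈ (0,1) and n₁, n₂ ∈ ℕ, and set r = ⌈9·log(3·n₁·n₂)/ε²⌉ ∈ ℕ (natural logarithm). Then for every matrix A ∈ ℝ^{n₁×n₂} there exists a matrix B ∈ ℝ^{n₁×n₂} with rank(B) ≤ r such that ‖A − B‖_max ≤ ε·γ₂(A). -/
/-!
Take a factorization `A = X Yᵀ` with `‖X‖_{2,∞} ‖Y‖_{2,∞}` close to `γ₂(A)` and compress the
rows with an `r × k` sign matrix `S`: `B = r⁻¹ (X Sᵀ) (S Yᵀ)` has rank at most `r`. Chernoff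
bounds for Rademacher sums (the upper tail via the Gaussian linearisation
`exp (λ x²) = 𝔼 exp (√(2λ) x g)`, the lower tail via the fourth moment) show that `S` distorts
`‖w‖²` by more than a factor `1 ± ε` for at most a `2 exp (-3 r ε² / 20)` fraction of all sign
matrices. A union bound over the `4 n₁ n₂` vectors `b xᵢ ± a yⱼ` (with `a`, `b` the two row norms)
yields one `S` good for all of them, and polarization turns this into
`|⟨xᵢ, yⱼ⟩ - r⁻¹ ⟨S xᵢ, S yⱼ⟩| ≤ ε a b`.
-/

open scoped BigOperators
open Matrix

namespace Stmt0

noncomputable def maxNorm {a b : ℕ} (A : Matrix (Fin a) (Fin b) ℝ) : ℝ :=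
  ⨆ i, ⨆ j, |A i j|

noncomputable def rowNormTwoInf {a k : ℕ} (X : Matrix (Fin a) (Fin k) ℝ) : ℝ :=
  ⨆ i, Real.sqrt (∑ j, X i j ^ 2)

noncomputable def gamma2 {a b : ℕ} (A : Matrix (Fin a) (Fin b) ℝ) : ℝ :=
  sInf { t | ∃ (k : ℕ) (X : Matrix (Fin a) (Fin k) ℝ) (Y : Matrix (Fin b) (Fin k) ℝ),
    A = X * Yᵀ ∧ t = rowNormTwoInf X * rowNormTwoInf Y }

open Real Finset MeasureTheory

def boolSign (b : Bool) : ℝ := if b then 1 else -1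

@[simp] lemma boolSign_true : boolSign true = 1 := rfl

@[simp] lemma boolSign_false : boolSign false = -1 := rfl

def signVec {k : ℕ} (v : Fin k → Bool) : Fin k → ℝ := fun l => boolSign (v l)

lemma dotProduct_self_nonneg {n : Type*} [Fintype n] (w : n → ℝ) : 0 ≤ w ⬝ᵥ w :=
  sum_nonneg fun i _ => mul_self_nonneg (w i)

section Rademacher

variable {k : ℕ}

lemma sum_fun_fin_succ_bool (f : (Fin (k + 1) → Bool) → ℝ) :
    ∑ v, f v = ∑ v : Fin k → Bool, (f (Fin.cons true v) + f (Fin.cons false v)) := by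
  rw [← (Fin.consEquiv fun _ => Bool).sum_comp, Fintype.sum_prod_type, Fintype.sum_bool,
    ← sum_add_distrib]
  rfl

lemma signVec_cons_dotProduct (b : Bool) (v : Fin k → Bool) (w : Fin (k + 1) → ℝ) :
    signVec (Fin.cons b v) ⬝ᵥ w = boolSign b * w 0 + signVec v ⬝ᵥ Fin.tail w := by
  simp [signVec, dotProduct, Fin.sum_univ_succ, Fin.tail]

lemma dotProduct_self_succ (w : Fin (k + 1) → ℝ) :
    w ⬝ᵥ w = w 0 ^ 2 + Fin.tail w ⬝ᵥ Fin.tail w := by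
  simp [dotProduct, Fin.sum_univ_succ, Fin.tail, sq]

lemma sum_signVec_dotProduct_sq (w : Fin k → ℝ) :
    ∑ v : Fin k → Bool, (signVec v ⬝ᵥ w) ^ 2 = 2 ^ k * (w ⬝ᵥ w) := by
  induction k with
  | zero => simp [dotProduct]
  | succ k ih =>
    simp only [sum_fun_fin_succ_bool, signVec_cons_dotProduct, boolSign_true, boolSign_false]
    have hpair : ∀ x : ℝ, (1 * w 0 + x) ^ 2 + (-1 * w 0 + x) ^ 2 = 2 * x ^ 2 + 2 * w 0 ^ 2 :=
      fun x => by ring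
    simp only [hpair, sum_add_distrib, ← mul_sum, ih, sum_const, card_univ, Fintype.card_pi,
      Fintype.card_bool, prod_const, Fintype.card_fin, nsmul_eq_mul, dotProduct_self_succ w]
    push_cast
    ring

lemma sum_signVec_dotProduct_pow_four_le (w : Fin k → ℝ) :
    ∑ v : Fin k → Bool, (signVec v ⬝ᵥ w) ^ 4 ≤ 3 * 2 ^ k * (w ⬝ᵥ w) ^ 2 := by
  induction k with
  | zero => simp [dotProduct]
  | succ k ih =>
    simp only [sum_fun_fin_succ_bool, signVec_cons_dotProduct, boolSign_true, boolSign_false]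
    have hpair : ∀ x : ℝ, (1 * w 0 + x) ^ 4 + (-1 * w 0 + x) ^ 4
        = 2 * x ^ 4 + 12 * w 0 ^ 2 * x ^ 2 + 2 * w 0 ^ 4 := fun x => by ring
    simp only [hpair, sum_add_distrib, ← mul_sum, sum_signVec_dotProduct_sq, sum_const,
      card_univ, Fintype.card_pi, Fintype.card_bool, prod_const, Fintype.card_fin, nsmul_eq_mul,
      dotProduct_self_succ w]
    have := ih (Fin.tail w)
    have := dotProduct_self_nonneg (Fin.tail w)
    have h2k : (0 : ℝ) < 2 ^ k := by positivity
    push_cast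
    rw [show (2 : ℝ) ^ (k + 1) = 2 * 2 ^ k by ring]
    nlinarith [mul_nonneg h2k.le (pow_nonneg (sq_nonneg (w 0)) 2),
      mul_nonneg h2k.le (mul_nonneg (sq_nonneg (w 0)) this)]

lemma sum_exp_mul_signVec_dotProduct (a : ℝ) (w : Fin k → ℝ) :
    ∑ v : Fin k → Bool, exp (a * (signVec v ⬝ᵥ w)) = ∏ l, 2 * cosh (a * w l) := by
  have hprod : ∀ v : Fin k → Bool,
      exp (a * (signVec v ⬝ᵥ w)) = ∏ l, exp (a * (boolSign (v l) * w l)) := fun v => by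
    rw [← exp_sum, dotProduct, mul_sum]; rfl
  simp only [hprod]
  rw [← Fintype.prod_sum fun l b => exp (a * (boolSign b * w l))]
  refine prod_congr rfl fun l _ => ?_
  simp only [Fintype.sum_bool, boolSign_true, boolSign_false, cosh_eq]
  ring_nf

lemma sum_exp_mul_signVec_dotProduct_le (a : ℝ) (w : Fin k → ℝ) :
    ∑ v : Fin k → Bool, exp (a * (signVec v ⬝ᵥ w)) ≤ 2 ^ k * exp (a ^ 2 * (w ⬝ᵥ w) / 2) := by
  calc ∑ v : Fin k → Bool, exp (a * (signVec v ⬝ᵥ w))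
      ≤ ∏ l, 2 * exp ((a * w l) ^ 2 / 2) := by
        rw [sum_exp_mul_signVec_dotProduct]
        gcongr with l
        exact cosh_le_exp_half_sq _
    _ = 2 ^ k * exp (a ^ 2 * (w ⬝ᵥ w) / 2) := by
        rw [prod_mul_distrib, prod_const, card_univ, Fintype.card_fin, ← exp_sum, dotProduct,
          mul_sum, sum_div]
        congr 2
        exact sum_congr rfl fun l _ => by ring

lemma exp_mul_sub_sq_div_two_eq (a g : ℝ) :
    exp (a * g - g ^ 2 / 2) = exp (a ^ 2 / 2) * exp (-2⁻¹ * (g - a) ^ 2) := by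
  rw [← exp_add]; ring_nf

lemma integrable_exp_mul_sub_sq_div_two (a : ℝ) :
    Integrable fun g : ℝ => exp (a * g - g ^ 2 / 2) := by
  simp only [exp_mul_sub_sq_div_two_eq a]
  exact ((integrable_exp_neg_mul_sq (by norm_num)).comp_sub_right a).const_mul _

lemma integral_exp_mul_sub_sq_div_two (a : ℝ) :
    ∫ g : ℝ, exp (a * g - g ^ 2 / 2) = exp (a ^ 2 / 2) * √(2 * π) := by
  simp only [exp_mul_sub_sq_div_two_eq a]
  rw [integral_const_mul, integral_sub_right_eq_self (fun g => exp (-2⁻¹ * g ^ 2)) a,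
    integral_gaussian]
  norm_num [div_inv_eq_mul, mul_comm]

lemma sum_exp_mul_signVec_dotProduct_sq_le {w : Fin k → ℝ} (hw : w ⬝ᵥ w ≤ 1) {lam : ℝ}
    (hlam0 : 0 ≤ lam) (hlam : lam < 1 / 2) :
    ∑ v : Fin k → Bool, exp (lam * (signVec v ⬝ᵥ w) ^ 2) ≤ 2 ^ k / √(1 - 2 * lam) := by
  set c := √(2 * lam)
  have hc : c ^ 2 = 2 * lam := sq_sqrt (by linarith)
  have hb : 0 < 2⁻¹ - lam := by linarith
  have hpoint : ∀ g : ℝ, ∑ v : Fin k → Bool, exp (c * (signVec v ⬝ᵥ w) * g - g ^ 2 / 2)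
      ≤ 2 ^ k * exp (-(2⁻¹ - lam) * g ^ 2) := fun g => by
    calc ∑ v : Fin k → Bool, exp (c * (signVec v ⬝ᵥ w) * g - g ^ 2 / 2)
        = (∑ v : Fin k → Bool, exp (c * g * (signVec v ⬝ᵥ w))) * exp (-(g ^ 2 / 2)) := by
          rw [sum_mul]
          exact sum_congr rfl fun v _ => by rw [← exp_add]; ring_nf
      _ ≤ 2 ^ k * exp ((c * g) ^ 2 * (w ⬝ᵥ w) / 2) * exp (-(g ^ 2 / 2)) := by
          gcongr
          exact sum_exp_mul_signVec_dotProduct_le _ w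
      _ ≤ 2 ^ k * exp (lam * g ^ 2) * exp (-(g ^ 2 / 2)) := by
          gcongr
          rw [mul_pow, hc]
          nlinarith [mul_nonneg hlam0 (sq_nonneg g)]
      _ = 2 ^ k * exp (-(2⁻¹ - lam) * g ^ 2) := by
          rw [mul_assoc, ← exp_add]; ring_nf
  have hsqrt : (0 : ℝ) < √(2 * π) := by positivity
  rw [← mul_le_mul_iff_of_pos_right hsqrt]
  calc (∑ v : Fin k → Bool, exp (lam * (signVec v ⬝ᵥ w) ^ 2)) * √(2 * π)
      = ∑ v : Fin k → Bool, ∫ g : ℝ, exp (c * (signVec v ⬝ᵥ w) * g - g ^ 2 / 2) := by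
        rw [sum_mul]
        refine sum_congr rfl fun v _ => ?_
        rw [integral_exp_mul_sub_sq_div_two, mul_pow, hc]
        ring_nf
    _ = ∫ g : ℝ, ∑ v : Fin k → Bool, exp (c * (signVec v ⬝ᵥ w) * g - g ^ 2 / 2) :=
        (integral_finsetSum _ fun v _ => integrable_exp_mul_sub_sq_div_two _).symm
    _ ≤ ∫ g : ℝ, 2 ^ k * exp (-(2⁻¹ - lam) * g ^ 2) :=
        integral_mono (integrable_finsetSum _ fun v _ => integrable_exp_mul_sub_sq_div_two _)
          ((integrable_exp_neg_mul_sq hb).const_mul _) hpoint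
    _ = 2 ^ k / √(1 - 2 * lam) * √(2 * π) := by
        rw [integral_const_mul, integral_gaussian,
          show π / (2⁻¹ - lam) = 2 * π / (1 - 2 * lam) by field_simp,
          sqrt_div (by positivity)]
        ring

lemma exp_neg_le_one_sub_add_sq_div_two {x : ℝ} (hx : 0 ≤ x) : exp (-x) ≤ 1 - x + x ^ 2 / 2 := by
  rw [exp_neg, inv_le_iff_one_le_mul₀ (exp_pos x)]
  nlinarith [quadratic_le_exp_of_nonneg hx, pow_nonneg hx 3, pow_nonneg hx 4]

lemma sum_exp_neg_mul_signVec_dotProduct_sq_le {w : Fin k → ℝ} (hw : w ⬝ᵥ w = 1) {lam : ℝ}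
    (hlam : 0 ≤ lam) :
    ∑ v : Fin k → Bool, exp (-(lam * (signVec v ⬝ᵥ w) ^ 2))
      ≤ 2 ^ k * exp (-lam + 3 / 2 * lam ^ 2) := by
  have hcard : ((Fintype.card (Fin k → Bool) : ℕ) : ℝ) = 2 ^ k := by simp
  calc ∑ v : Fin k → Bool, exp (-(lam * (signVec v ⬝ᵥ w) ^ 2))
      ≤ ∑ v : Fin k → Bool,
          (1 - lam * (signVec v ⬝ᵥ w) ^ 2 + lam ^ 2 / 2 * (signVec v ⬝ᵥ w) ^ 4) := by
        refine sum_le_sum fun v _ => ?_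
        have := exp_neg_le_one_sub_add_sq_div_two (x := lam * (signVec v ⬝ᵥ w) ^ 2)
          (by positivity)
        linear_combination this
    _ = 2 ^ k * (1 - lam) + lam ^ 2 / 2 * ∑ v : Fin k → Bool, (signVec v ⬝ᵥ w) ^ 4 := by
        rw [sum_add_distrib, sum_sub_distrib, ← mul_sum, ← mul_sum, sum_signVec_dotProduct_sq,
          hw, sum_const, card_univ, nsmul_eq_mul, hcard]
        ring
    _ ≤ 2 ^ k * (1 + (-lam + 3 / 2 * lam ^ 2)) := by
        have := sum_signVec_dotProduct_pow_four_le w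
        rw [hw] at this
        nlinarith [sq_nonneg lam]
    _ ≤ 2 ^ k * exp (-lam + 3 / 2 * lam ^ 2) := by
        gcongr
        linarith [add_one_le_exp (-lam + 3 / 2 * lam ^ 2)]

end Rademacher

section Chernoff

lemma card_lt_sum_le {V : Type*} [Fintype V] {R : ℕ} (f : V → ℝ) (a : ℝ) {lam : ℝ}
    (hlam : 0 ≤ lam) :
    (#{ω : Fin R → V | a < ∑ t, f (ω t)} : ℝ)
      ≤ exp (-(lam * a)) * (∑ v, exp (lam * f v)) ^ R := by
  calc (#{ω : Fin R → V | a < ∑ t, f (ω t)} : ℝ)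
      = ∑ ω ∈ {ω : Fin R → V | a < ∑ t, f (ω t)}, (1 : ℝ) := by simp
    _ ≤ ∑ ω ∈ {ω : Fin R → V | a < ∑ t, f (ω t)}, exp (lam * (∑ t, f (ω t) - a)) :=
        sum_le_sum fun ω hω =>
          one_le_exp (mul_nonneg hlam (sub_nonneg.2 (mem_filter.1 hω).2.le))
    _ ≤ ∑ ω : Fin R → V, exp (lam * (∑ t, f (ω t) - a)) :=
        sum_le_sum_of_subset_of_nonneg (filter_subset _ _) fun _ _ _ => (exp_pos _).le
    _ = exp (-(lam * a)) * (∑ v, exp (lam * f v)) ^ R := by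
        rw [Fintype.sum_pow, mul_sum]
        refine sum_congr rfl fun ω _ => ?_
        rw [← exp_sum, ← exp_add, mul_sub, mul_sum]
        ring_nf

variable {k R : ℕ} {ε : ℝ}

lemma card_sum_sq_gt_le (hε : 0 < ε) {w : Fin k → ℝ} (hw : w ⬝ᵥ w ≤ 1) :
    (#{ω : Fin R → Fin k → Bool | (1 + ε) * R < ∑ t, (signVec (ω t) ⬝ᵥ w) ^ 2} : ℝ)
      ≤ 2 ^ (k * R) * exp (-(R / 2 * (ε - log (1 + ε)))) := by
  set lam := ε / (2 * (1 + ε))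
  have hlam : 1 - 2 * lam = (1 + ε)⁻¹ := by simp only [lam]; field_simp; ring
  have hsqrt : (√(1 - 2 * lam))⁻¹ = exp (log (1 + ε) / 2) := by
    rw [hlam, sqrt_inv, inv_inv, exp_half, exp_log (by linarith)]
  calc (#{ω : Fin R → Fin k → Bool | (1 + ε) * R < ∑ t, (signVec (ω t) ⬝ᵥ w) ^ 2} : ℝ)
      ≤ exp (-(lam * ((1 + ε) * R))) * (∑ v, exp (lam * (signVec v ⬝ᵥ w) ^ 2)) ^ R :=
        card_lt_sum_le (fun v => (signVec v ⬝ᵥ w) ^ 2) _ (by positivity)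
    _ ≤ exp (-(lam * ((1 + ε) * R))) * (2 ^ k / √(1 - 2 * lam)) ^ R := by
        gcongr
        refine sum_exp_mul_signVec_dotProduct_sq_le hw (by positivity) ?_
        rw [div_lt_iff₀ (by positivity)]
        linarith
    _ = 2 ^ (k * R) * exp (-(R / 2 * (ε - log (1 + ε)))) := by
        rw [div_eq_mul_inv, hsqrt, mul_pow, ← exp_nat_mul, pow_mul, mul_left_comm, ← exp_add]
        congr 2
        simp only [lam]
        field_simp
        ring

lemma card_sum_sq_lt_le (hε : 0 < ε) {w : Fin k → ℝ} (hw : w ⬝ᵥ w = 1) :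
    (#{ω : Fin R → Fin k → Bool | ∑ t, (signVec (ω t) ⬝ᵥ w) ^ 2 < (1 - ε) * R} : ℝ)
      ≤ 2 ^ (k * R) * exp (-(R * ε ^ 2 / 6)) := by
  have hneg : ∀ ω : Fin R → Fin k → Bool, ∑ t, (signVec (ω t) ⬝ᵥ w) ^ 2 < (1 - ε) * R ↔
      -((1 - ε) * R) < ∑ t, -(signVec (ω t) ⬝ᵥ w) ^ 2 := fun ω => by
    rw [sum_neg_distrib, neg_lt_neg_iff]
  simp only [hneg]
  calc (#{ω : Fin R → Fin k → Bool | -((1 - ε) * R) < ∑ t, -(signVec (ω t) ⬝ᵥ w) ^ 2} : ℝ)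
      ≤ exp (-(ε / 3 * -((1 - ε) * R))) * (∑ v, exp (ε / 3 * -(signVec v ⬝ᵥ w) ^ 2)) ^ R :=
        card_lt_sum_le (fun v => -(signVec v ⬝ᵥ w) ^ 2) _ (by positivity)
    _ ≤ exp (-(ε / 3 * -((1 - ε) * R))) * (2 ^ k * exp (-(ε / 3) + 3 / 2 * (ε / 3) ^ 2)) ^ R := by
        simp only [mul_neg]
        gcongr
        exact sum_exp_neg_mul_signVec_dotProduct_sq_le hw (by positivity)
    _ = 2 ^ (k * R) * exp (-(R * ε ^ 2 / 6)) := by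
        rw [mul_pow, ← exp_nat_mul, pow_mul, mul_left_comm, ← exp_add]
        ring_nf

lemma three_div_ten_mul_sq_le_sub_log_one_add {x : ℝ} (h0 : 0 ≤ x) (h1 : x ≤ 1) :
    3 / 10 * x ^ 2 ≤ x - log (1 + x) := by
  have hy : 0 ≤ x - 3 / 10 * x ^ 2 := by nlinarith
  have hexp := sum_le_exp_of_nonneg hy 4
  simp only [sum_range_succ, sum_range_zero, Nat.factorial] at hexp
  norm_num at hexp
  have : log (1 + x) ≤ x - 3 / 10 * x ^ 2 := by
    rw [log_le_iff_le_exp (by linarith)]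
    refine le_trans ?_ hexp
    nlinarith [mul_nonneg h0 (sub_nonneg.2 h1), pow_nonneg h0 3, pow_nonneg h0 4,
      mul_nonneg (pow_nonneg h0 3) (sub_nonneg.2 h1)]
  linarith

lemma card_abs_sum_sq_sub_gt_le_of_unit (hε0 : 0 < ε) (hε1 : ε ≤ 1) {w : Fin k → ℝ}
    (hw : w ⬝ᵥ w = 1) :
    (#{ω : Fin R → Fin k → Bool | ε * R < |∑ t, (signVec (ω t) ⬝ᵥ w) ^ 2 - R|} : ℝ)
      ≤ 2 * 2 ^ (k * R) * exp (-(3 / 20 * R * ε ^ 2)) := by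
  have hsplit : ∀ ω : Fin R → Fin k → Bool, ε * R < |∑ t, (signVec (ω t) ⬝ᵥ w) ^ 2 - R| →
      (1 + ε) * R < ∑ t, (signVec (ω t) ⬝ᵥ w) ^ 2 ∨ ∑ t, (signVec (ω t) ⬝ᵥ w) ^ 2 < (1 - ε) * R :=
    fun ω h => (lt_abs.1 h).imp (fun h => by linarith) fun h => by linarith
  have hupper : exp (-(R / 2 * (ε - log (1 + ε)))) ≤ exp (-(3 / 20 * R * ε ^ 2)) := by
    rw [exp_le_exp]
    have := three_div_ten_mul_sq_le_sub_log_one_add hε0.le hε1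
    nlinarith [(Nat.cast_nonneg R : (0 : ℝ) ≤ R)]
  have hlower : exp (-(R * ε ^ 2 / 6)) ≤ exp (-(3 / 20 * R * ε ^ 2)) := by
    rw [exp_le_exp]
    nlinarith [mul_nonneg (Nat.cast_nonneg R : (0 : ℝ) ≤ R) (sq_nonneg ε)]
  calc (#{ω : Fin R → Fin k → Bool | ε * R < |∑ t, (signVec (ω t) ⬝ᵥ w) ^ 2 - R|} : ℝ)
      ≤ #{ω : Fin R → Fin k → Bool | (1 + ε) * R < ∑ t, (signVec (ω t) ⬝ᵥ w) ^ 2}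
        + #{ω : Fin R → Fin k → Bool | ∑ t, (signVec (ω t) ⬝ᵥ w) ^ 2 < (1 - ε) * R} := by
        rw [← Nat.cast_add, Nat.cast_le]
        refine (card_le_card ?_).trans (card_union_le _ _)
        exact (monotone_filter_right _ fun ω _ => hsplit ω).trans_eq (filter_or _ _ _)
    _ ≤ 2 ^ (k * R) * exp (-(R / 2 * (ε - log (1 + ε)))) + 2 ^ (k * R) * exp (-(R * ε ^ 2 / 6)) :=
        add_le_add (card_sum_sq_gt_le hε0 hw.le) (card_sum_sq_lt_le hε0 hw)
    _ ≤ 2 * 2 ^ (k * R) * exp (-(3 / 20 * R * ε ^ 2)) := by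
        nlinarith [pow_pos (two_pos : (0 : ℝ) < 2) (k * R)]

lemma card_abs_sum_sq_sub_gt_le (hε0 : 0 < ε) (hε1 : ε ≤ 1) (w : Fin k → ℝ) :
    (#{ω : Fin R → Fin k → Bool |
        ε * R * (w ⬝ᵥ w) < |∑ t, (signVec (ω t) ⬝ᵥ w) ^ 2 - R * (w ⬝ᵥ w)|} : ℝ)
      ≤ 2 * 2 ^ (k * R) * exp (-(3 / 20 * R * ε ^ 2)) := by
  rcases (dotProduct_self_nonneg w).eq_or_lt with h0 | hpos
  · rw [dotProduct_self_eq_zero.1 h0.symm]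
    simp only [dotProduct_zero, mul_zero, zero_pow two_ne_zero, sum_const_zero, sub_zero,
      abs_zero, lt_irrefl, filter_false, card_empty, Nat.cast_zero]
    positivity
  set u := (√(w ⬝ᵥ w))⁻¹ • w
  have hsqrt : 0 < √(w ⬝ᵥ w) := sqrt_pos.2 hpos
  have hu : u ⬝ᵥ u = 1 := by
    simp only [u, dotProduct_smul, smul_dotProduct, smul_eq_mul, ← mul_assoc, ← mul_inv,
      mul_self_sqrt hpos.le]
    exact inv_mul_cancel₀ hpos.ne'
  have hcond : ∀ ω : Fin R → Fin k → Bool,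
      ε * R * (w ⬝ᵥ w) < |∑ t, (signVec (ω t) ⬝ᵥ w) ^ 2 - R * (w ⬝ᵥ w)| ↔
        ε * R < |∑ t, (signVec (ω t) ⬝ᵥ u) ^ 2 - R| := fun ω => by
    have hsum : ∑ t, (signVec (ω t) ⬝ᵥ w) ^ 2 = (w ⬝ᵥ w) * ∑ t, (signVec (ω t) ⬝ᵥ u) ^ 2 := by
      simp only [u, dotProduct_smul, smul_eq_mul, mul_pow, inv_pow, sq_sqrt hpos.le, ← mul_sum,
        ← mul_assoc, mul_inv_cancel₀ hpos.ne', one_mul]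
    rw [hsum, show ∀ S : ℝ, (w ⬝ᵥ w) * S - R * (w ⬝ᵥ w) = (w ⬝ᵥ w) * (S - R) from
      fun S => by ring, abs_mul, abs_of_pos hpos, mul_comm _ (w ⬝ᵥ w), mul_lt_mul_iff_right₀ hpos]
  simp only [hcond]
  exact card_abs_sum_sq_sub_gt_le_of_unit hε0 hε1 hu

end Chernoff

def signMatrix {R k : ℕ} (ω : Fin R → Fin k → Bool) : Matrix (Fin R) (Fin k) ℝ :=
  of fun t => signVec (ω t)

lemma signMatrix_mulVec_dotProduct_self {R k : ℕ} (ω : Fin R → Fin k → Bool) (w : Fin k → ℝ) :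
    (signMatrix ω *ᵥ w) ⬝ᵥ (signMatrix ω *ᵥ w) = ∑ t, (signVec (ω t) ⬝ᵥ w) ^ 2 := by
  simp only [dotProduct, mulVec, signMatrix, of_apply, sq]

def PreservesSqNormApprox {m n : Type*} [Fintype m] [Fintype n] (M : Matrix m n ℝ) (c ε : ℝ)
    (x : n → ℝ) : Prop :=
  |(M *ᵥ x) ⬝ᵥ (M *ᵥ x) - c * (x ⬝ᵥ x)| ≤ ε * c * (x ⬝ᵥ x)

lemma exists_signMatrix_forall_preservesSqNormApprox {ι : Type*} [Fintype ι] {k R : ℕ} {ε : ℝ}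
    (hε0 : 0 < ε) (hε1 : ε ≤ 1) (w : ι → Fin k → ℝ)
    (hR : 2 * Fintype.card ι * exp (-(3 / 20 * R * ε ^ 2)) < 1) :
    ∃ ω : Fin R → Fin k → Bool, ∀ i, PreservesSqNormApprox (signMatrix ω) R ε (w i) := by
  by_contra! hbad
  have hcover : (univ : Finset (Fin R → Fin k → Bool)) ⊆ univ.biUnion fun i =>
      {ω | ε * R * (w i ⬝ᵥ w i) < |∑ t, (signVec (ω t) ⬝ᵥ w i) ^ 2 - R * (w i ⬝ᵥ w i)|} := by
    intro ω _
    obtain ⟨i, hi⟩ := hbad ω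
    simp only [PreservesSqNormApprox, signMatrix_mulVec_dotProduct_self, not_le] at hi
    simpa using ⟨i, hi⟩
  have hcount : (2 : ℝ) ^ (k * R)
      ≤ Fintype.card ι * (2 * 2 ^ (k * R) * exp (-(3 / 20 * R * ε ^ 2))) := by
    calc (2 : ℝ) ^ (k * R) = #(univ : Finset (Fin R → Fin k → Bool)) := by simp [pow_mul]
      _ ≤ ∑ i, (#{ω : Fin R → Fin k → Bool | ε * R * (w i ⬝ᵥ w i) <
            |∑ t, (signVec (ω t) ⬝ᵥ w i) ^ 2 - R * (w i ⬝ᵥ w i)|} : ℝ) := by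
          exact_mod_cast (card_le_card hcover).trans card_biUnion_le
      _ ≤ _ := by
          simpa using sum_le_sum fun i (_ : i ∈ univ) =>
            card_abs_sum_sq_sub_gt_le (R := R) hε0 hε1 (w i)
  nlinarith [pow_pos (two_pos : (0 : ℝ) < 2) (k * R)]

section Polarization

variable {m n : Type*} [Fintype m] [Fintype n] {M : Matrix m n ℝ} {c ε : ℝ} {x y : n → ℝ}

lemma PreservesSqNormApprox.abs_mulVec_dotProduct_sub_le
    (hadd : PreservesSqNormApprox M c ε (x + y)) (hsub : PreservesSqNormApprox M c ε (x - y)) :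
    |(M *ᵥ x) ⬝ᵥ (M *ᵥ y) - c * (x ⬝ᵥ y)| ≤ ε * c * (x ⬝ᵥ x + y ⬝ᵥ y) / 2 := by
  unfold PreservesSqNormApprox at hadd hsub
  simp only [mulVec_add, mulVec_sub, add_dotProduct, dotProduct_add, sub_dotProduct,
    dotProduct_sub, dotProduct_comm y x, dotProduct_comm (M *ᵥ y) (M *ᵥ x)] at hadd hsub
  rw [abs_le] at hadd hsub ⊢
  constructor <;> nlinarith [hadd.1, hadd.2, hsub.1, hsub.2]

/-- Rescaling to `b • x ± a • y` balances the two norms before polarizing. -/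
lemma abs_dotProduct_sub_inv_mul_mulVec_dotProduct_le {a b : ℝ} (hc : 0 < c) (hε : 0 ≤ ε)
    (ha : 0 < a) (hb : 0 < b) (hx : x ⬝ᵥ x ≤ a ^ 2) (hy : y ⬝ᵥ y ≤ b ^ 2)
    (hadd : PreservesSqNormApprox M c ε (b • x + a • y))
    (hsub : PreservesSqNormApprox M c ε (b • x - a • y)) :
    |x ⬝ᵥ y - c⁻¹ * ((M *ᵥ x) ⬝ᵥ (M *ᵥ y))| ≤ ε * (a * b) := by
  have hpol := hadd.abs_mulVec_dotProduct_sub_le hsub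
  simp only [mulVec_smul, smul_dotProduct, dotProduct_smul, smul_eq_mul] at hpol
  have hab : 0 < a * b := mul_pos ha hb
  have hkey : a * b * |(M *ᵥ x) ⬝ᵥ (M *ᵥ y) - c * (x ⬝ᵥ y)| ≤ a * b * (ε * c * (a * b)) := by
    calc a * b * |(M *ᵥ x) ⬝ᵥ (M *ᵥ y) - c * (x ⬝ᵥ y)|
        = |a * (b * ((M *ᵥ x) ⬝ᵥ (M *ᵥ y))) - c * (a * (b * (x ⬝ᵥ y)))| := by
          rw [← abs_of_pos hab, ← abs_mul]
          ring_nf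
      _ ≤ ε * c * (b * (b * (x ⬝ᵥ x)) + a * (a * (y ⬝ᵥ y))) / 2 := hpol
      _ ≤ a * b * (ε * c * (a * b)) := by
          have hεc : 0 ≤ ε * c := mul_nonneg hε hc.le
          have : b * (b * (x ⬝ᵥ x)) + a * (a * (y ⬝ᵥ y)) ≤ 2 * (a * b) ^ 2 := by
            nlinarith [mul_le_mul_of_nonneg_left hx (sq_nonneg b),
              mul_le_mul_of_nonneg_left hy (sq_nonneg a)]
          nlinarith [mul_le_mul_of_nonneg_left this hεc]
  have hdiff : |(M *ᵥ x) ⬝ᵥ (M *ᵥ y) - c * (x ⬝ᵥ y)| ≤ ε * c * (a * b) :=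
    le_of_mul_le_mul_left hkey hab
  calc |x ⬝ᵥ y - c⁻¹ * ((M *ᵥ x) ⬝ᵥ (M *ᵥ y))|
      = c⁻¹ * |(M *ᵥ x) ⬝ᵥ (M *ᵥ y) - c * (x ⬝ᵥ y)| := by
        rw [← abs_of_pos (inv_pos.2 hc), ← abs_mul, abs_of_pos (inv_pos.2 hc), abs_sub_comm,
          mul_sub, inv_mul_cancel_left₀ hc.ne']
    _ ≤ c⁻¹ * (ε * c * (a * b)) := by gcongr
    _ = ε * (a * b) := by field_simp

end Polarization

lemma mul_transpose_mul_mul_transpose_apply {l m n p : Type*} [Fintype m] [Fintype n]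
    (X : Matrix l n ℝ) (S : Matrix m n ℝ) (Y : Matrix p n ℝ) (i : l) (j : p) :
    (X * Sᵀ * (S * Yᵀ)) i j = (S *ᵥ X i) ⬝ᵥ (S *ᵥ Y j) := by
  have hrow : (X * Sᵀ) i = S *ᵥ X i := funext fun t => dotProduct_comm _ _
  rw [mul_apply', hrow]
  rfl

theorem exists_rank_le_abs_mul_transpose_sub_le {n₁ n₂ k R : ℕ} (X : Matrix (Fin n₁) (Fin k) ℝ)
    (Y : Matrix (Fin n₂) (Fin k) ℝ) {a b ε : ℝ} (ha : 0 < a) (hb : 0 < b)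
    (hX : ∀ i, X i ⬝ᵥ X i ≤ a ^ 2) (hY : ∀ j, Y j ⬝ᵥ Y j ≤ b ^ 2) (hε0 : 0 < ε) (hε1 : ε ≤ 1)
    (hR : 4 * n₁ * n₂ * exp (-(3 / 20 * R * ε ^ 2)) < 1) :
    ∃ B : Matrix (Fin n₁) (Fin n₂) ℝ, B.rank ≤ R ∧ ∀ i j, |(X * Yᵀ) i j - B i j| ≤ ε * (a * b) := by
  have hcard : 2 * (Fintype.card (Fin n₁ × Fin n₂ × Bool) : ℝ) = 4 * n₁ * n₂ := by
    simp only [Fintype.card_prod, Fintype.card_fin, Fintype.card_bool]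
    push_cast
    ring
  obtain ⟨ω, hω⟩ := exists_signMatrix_forall_preservesSqNormApprox hε0 hε1
    (fun p : Fin n₁ × Fin n₂ × Bool => bif p.2.2 then b • X p.1 + a • Y p.2.1
      else b • X p.1 - a • Y p.2.1) (by rwa [hcard])
  set S := signMatrix ω
  refine ⟨X * Sᵀ * ((R : ℝ)⁻¹ • (S * Yᵀ)),
    (rank_mul_le_left _ _).trans (rank_le_width _), fun i j => ?_⟩
  have hR0 : (0 : ℝ) < R := by
    have h1 : (1 : ℝ) ≤ n₁ := by exact_mod_cast i.pos
    have h2 : (1 : ℝ) ≤ n₂ := by exact_mod_cast j.pos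
    rcases (Nat.cast_nonneg R : (0 : ℝ) ≤ R).eq_or_lt with h | h
    · rw [← h] at hR
      simp only [mul_zero, zero_mul, neg_zero, exp_zero, mul_one] at hR
      nlinarith
    · exact h
  rw [Matrix.mul_smul, Matrix.smul_apply, mul_transpose_mul_mul_transpose_apply, smul_eq_mul,
    mul_apply']
  exact abs_dotProduct_sub_inv_mul_mulVec_dotProduct_le hR0 hε0.le ha hb (hX i) (hY j)
    (hω (i, j, true)) (hω (i, j, false))

section FactorizationNorm

variable {a b : ℕ}

lemma maxNorm_le {A : Matrix (Fin a) (Fin b) ℝ} {c : ℝ} (hc : 0 ≤ c) (h : ∀ i j, |A i j| ≤ c) :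
    maxNorm A ≤ c :=
  Real.iSup_le (fun i => Real.iSup_le (h i) hc) hc

lemma rowNormTwoInf_nonneg {k : ℕ} (X : Matrix (Fin a) (Fin k) ℝ) : 0 ≤ rowNormTwoInf X :=
  Real.iSup_nonneg fun _ => sqrt_nonneg _

lemma dotProduct_self_le_rowNormTwoInf_sq {k : ℕ} (X : Matrix (Fin a) (Fin k) ℝ) (i : Fin a) :
    X i ⬝ᵥ X i ≤ rowNormTwoInf X ^ 2 := by
  have hrow : √(∑ l, X i l ^ 2) ≤ rowNormTwoInf X :=
    le_ciSup (f := fun i => √(∑ l, X i l ^ 2)) (Set.finite_range _).bddAbove i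
  calc X i ⬝ᵥ X i = √(∑ l, X i l ^ 2) ^ 2 := by
        rw [sq_sqrt (by positivity)]
        simp only [dotProduct, sq]
    _ ≤ rowNormTwoInf X ^ 2 := by gcongr

lemma gamma2_nonneg (A : Matrix (Fin a) (Fin b) ℝ) : 0 ≤ gamma2 A :=
  Real.sInf_nonneg <| by
    rintro t ⟨k, X, Y, -, rfl⟩
    exact mul_nonneg (rowNormTwoInf_nonneg X) (rowNormTwoInf_nonneg Y)

lemma gamma2_le_of_eq_mul_transpose {k : ℕ} {A : Matrix (Fin a) (Fin b) ℝ}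
    {X : Matrix (Fin a) (Fin k) ℝ} {Y : Matrix (Fin b) (Fin k) ℝ} (hA : A = X * Yᵀ) :
    gamma2 A ≤ rowNormTwoInf X * rowNormTwoInf Y := by
  refine csInf_le ⟨0, ?_⟩ ⟨k, X, Y, hA, rfl⟩
  rintro t ⟨k, X, Y, -, rfl⟩
  exact mul_nonneg (rowNormTwoInf_nonneg X) (rowNormTwoInf_nonneg Y)

lemma exists_eq_mul_transpose_lt_of_gamma2_lt {A : Matrix (Fin a) (Fin b) ℝ} {c : ℝ}
    (h : gamma2 A < c) :
    ∃ (k : ℕ) (X : Matrix (Fin a) (Fin k) ℝ) (Y : Matrix (Fin b) (Fin k) ℝ),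
      A = X * Yᵀ ∧ rowNormTwoInf X * rowNormTwoInf Y < c := by
  obtain ⟨t, ⟨k, X, Y, hA, rfl⟩, ht⟩ :=
    exists_lt_of_csInf_lt (by exact ⟨_, b, A, 1, by simp, rfl⟩) h
  exact ⟨k, X, Y, hA, ht⟩

lemma abs_apply_le_gamma2 (A : Matrix (Fin a) (Fin b) ℝ) (i : Fin a) (j : Fin b) :
    |A i j| ≤ gamma2 A := by
  refine le_csInf ⟨_, b, A, 1, by simp, rfl⟩ ?_
  rintro t ⟨k, X, Y, rfl, rfl⟩
  have hcs : (X i ⬝ᵥ Y j) ^ 2 ≤ (X i ⬝ᵥ X i) * (Y j ⬝ᵥ Y j) := by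
    simpa only [dotProduct, sq] using sum_mul_sq_le_sq_mul_sq univ (X i) (Y j)
  have hrows := mul_le_mul (dotProduct_self_le_rowNormTwoInf_sq X i)
    (dotProduct_self_le_rowNormTwoInf_sq Y j) (dotProduct_self_nonneg _) (sq_nonneg _)
  change |X i ⬝ᵥ Y j| ≤ _
  exact abs_le_of_sq_le_sq (by rw [mul_pow]; linarith)
    (mul_nonneg (rowNormTwoInf_nonneg X) (rowNormTwoInf_nonneg Y))

end FactorizationNorm

lemma four_mul_mul_exp_neg_lt_one (n₁ n₂ : ℕ) {ε : ℝ} (hε : 0 < ε) :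
    4 * n₁ * n₂ * exp (-(3 / 20 * ⌈9 * log (3 * n₁ * n₂) / ε ^ 2⌉₊ * (199 / 200 * ε) ^ 2)) < 1 := by
  simp only [mul_assoc (4 : ℝ), mul_assoc (3 : ℝ)]
  set R := ⌈9 * log (3 * (n₁ * n₂ : ℝ)) / ε ^ 2⌉₊
  rcases Nat.eq_zero_or_pos (n₁ * n₂) with h0 | hpos
  · have hm : (n₁ * n₂ : ℝ) = 0 := by exact_mod_cast h0
    simp [hm]
  set m : ℝ := n₁ * n₂
  have hm : 1 ≤ m := by simp only [m]; exact_mod_cast Nat.one_le_iff_ne_zero.2 hpos.ne'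
  set L := log (3 * m)
  have hL : 0 < L := log_pos (by linarith)
  have hexponent : 4 / 3 * L ≤ 3 / 20 * R * (199 / 200 * ε) ^ 2 := by
    have hR := mul_le_mul_of_nonneg_right (Nat.le_ceil (9 * L / ε ^ 2))
      (by positivity : (0 : ℝ) ≤ 3 / 20 * (199 / 200 * ε) ^ 2)
    have hcancel : 9 * L / ε ^ 2 * (3 / 20 * (199 / 200 * ε) ^ 2)
        = 27 / 20 * (199 / 200) ^ 2 * L := by
      field_simp
      norm_num
    nlinarith
  have hlog : log (4 * m) < 4 / 3 * L := by
    have h := log_lt_log (by positivity) (by nlinarith [pow_le_pow_left₀ zero_le_one hm 3] :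
      (4 * m) ^ 3 < (3 * m) ^ 4)
    rw [log_pow, log_pow] at h
    push_cast at h
    linarith
  calc 4 * (m * exp (-(3 / 20 * R * (199 / 200 * ε) ^ 2)))
      = exp (log (4 * m) - 3 / 20 * R * (199 / 200 * ε) ^ 2) := by
        rw [← mul_assoc, exp_sub, exp_log (by positivity), exp_neg]
        exact (div_eq_mul_inv _ _).symm
    _ < 1 := by
        rw [exp_lt_one_iff]
        linarith

/-- For every `ε ∈ (0,1)` and `r = ⌈9 log(3 n₁ n₂) / ε²⌉`, every real `n₁ × n₂` matrix `A`
admits an approximation `B` of rank at most `r` with `‖A − B‖_max ≤ ε · γ₂(A)`. -/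
theorem matrix_entrywise_approx (ε : ℝ) (hε0 : 0 < ε) (hε1 : ε < 1) (n₁ n₂ : ℕ)
    (A : Matrix (Fin n₁) (Fin n₂) ℝ) :
    ∃ B : Matrix (Fin n₁) (Fin n₂) ℝ,
      B.rank ≤ ⌈9 * Real.log (3 * n₁ * n₂) / ε ^ 2⌉₊ ∧
      maxNorm (A - B) ≤ ε * gamma2 A := by
  rcases (gamma2_nonneg A).eq_or_lt with hγ | hγ
  · refine ⟨0, by simp, maxNorm_le (by rw [← hγ, mul_zero]) fun i j => ?_⟩
    simpa [← hγ] using abs_apply_le_gamma2 A i j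
  -- `γ₂` need not be attained: take a factorization within `200/199` of it and sketch it to
  -- accuracy `199/200 * ε`.
  obtain ⟨k, X, Y, hA, hXY⟩ := exists_eq_mul_transpose_lt_of_gamma2_lt
    (lt_mul_of_one_lt_right hγ (by norm_num : (1 : ℝ) < 200 / 199))
  have hpos := hγ.trans_le (gamma2_le_of_eq_mul_transpose hA)
  have ha := (rowNormTwoInf_nonneg X).lt_of_ne fun h => by simp [← h] at hpos
  have hb := (rowNormTwoInf_nonneg Y).lt_of_ne fun h => by simp [← h] at hpos
  obtain ⟨B, hrank, hB⟩ := exists_rank_le_abs_mul_transpose_sub_le X Y ha hb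
    (dotProduct_self_le_rowNormTwoInf_sq X) (dotProduct_self_le_rowNormTwoInf_sq Y)
    (by positivity) (by linarith) (four_mul_mul_exp_neg_lt_one n₁ n₂ hε0)
  refine ⟨B, hrank, maxNorm_le (by positivity) fun i j => ?_⟩
  calc |(A - B) i j| = |(X * Yᵀ) i j - B i j| := by rw [hA, Matrix.sub_apply]
    _ ≤ 199 / 200 * ε * (rowNormTwoInf X * rowNormTwoInf Y) := hB i j
    _ ≤ ε * gamma2 A := by nlinarith

end Stmt0
end

section
/- Let ‖·‖_∘ be a matrix norm defined for real matrices of all sizes that is submultiplicative, i.e. ‖AB‖_∘ ≤ ‖A‖_∘·‖B‖_∘ for all matrices A, B of compatible sizes. Then for every d ≥ 2 and every tensor A ∈ ℝ^{n₁×⋯×n_d}: (i) γ_∘^TT(A) = 0 if and only if A = 0; (ii) γ_∘^TT(c·A) = |c|·γ_∘^TT(A) for every c ∈ ℝ. -/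
open scoped BigOperators
open Matrix

namespace TT

/-- Evaluation of a tensor-train factorization: `A(i₁,…,i_d) = Σ_α Π_s G_s(α_{s-1}, i_s, α_s)`. -/
noncomputable def ttEval {d : ℕ} (n : Fin d → ℕ) (ρ : Fin (d + 1) → ℕ)
    (G : ∀ s : Fin d, Fin (ρ s.castSucc) → Fin (n s) → Fin (ρ s.succ) → ℝ) :
    (∀ s : Fin d, Fin (n s)) → ℝ := fun i =>
  ∑ α : ∀ s : Fin (d + 1), Fin (ρ s), ∏ s : Fin d, G s (α s.castSucc) (i s) (α s.succ)

/-- `‖G‖_{∘,∞} = max_i ‖G(:,i,:)‖_∘` for a third-order tensor `G ∈ ℝ^{p×n×q}`. -/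
noncomputable def sliceNormInf (ν : ∀ p q : ℕ, Matrix (Fin p) (Fin q) ℝ → ℝ)
    {p n q : ℕ} (G : Fin p → Fin n → Fin q → ℝ) : ℝ :=
  ⨆ i : Fin n, ν p q (fun a b => G a i b)

/-- The TT factorization quasinorm `γ_∘^TT` associated with a matrix norm `‖·‖_∘`. -/
noncomputable def gammaTT {d : ℕ} (n : Fin d → ℕ) (ν : ∀ p q : ℕ, Matrix (Fin p) (Fin q) ℝ → ℝ)
    (A : (∀ s : Fin d, Fin (n s)) → ℝ) : ℝ :=
  sInf { y | ∃ ρ : Fin (d + 1) → ℕ, ρ 0 = 1 ∧ ρ (Fin.last d) = 1 ∧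
    ∃ G : ∀ s : Fin d, Fin (ρ s.castSucc) → Fin (n s) → Fin (ρ s.succ) → ℝ,
      ttEval n ρ G = A ∧ y = ∏ s : Fin d, sliceNormInf ν (G s) }

/-- Frobenius norm of a matrix. -/
noncomputable def frobNorm {p q : ℕ} (M : Matrix (Fin p) (Fin q) ℝ) : ℝ :=
  Real.sqrt (∑ i, ∑ j, M i j ^ 2)

/-- Euclidean norm of a vector. -/
noncomputable def vecNorm {q : ℕ} (x : Fin q → ℝ) : ℝ := Real.sqrt (∑ j, x j ^ 2)

/-- Spectral norm of a matrix: `‖M‖₂ = max{‖Mx‖₂ : ‖x‖₂ = 1}`. -/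
noncomputable def specNorm {p q : ℕ} (M : Matrix (Fin p) (Fin q) ℝ) : ℝ :=
  sSup { y | ∃ x : Fin q → ℝ, vecNorm x = 1 ∧ y = vecNorm (M.mulVec x) }

/-- Entrywise maximum norm of a tensor. -/
noncomputable def maxNorm {d : ℕ} {n : Fin d → ℕ} (A : (∀ s : Fin d, Fin (n s)) → ℝ) : ℝ :=
  ⨆ i, |A i|

/-- `ttRankLE n B r` : `B` admits a TT factorization all of whose ranks are at most `r`,
i.e. every component of `ttrank(B)` is at most `r`. -/
def ttRankLE {d : ℕ} (n : Fin d → ℕ) (B : (∀ s : Fin d, Fin (n s)) → ℝ) (r : ℕ) : Prop :=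
  ∃ ρ : Fin (d + 1) → ℕ, ρ 0 = 1 ∧ ρ (Fin.last d) = 1 ∧
    (∀ s : Fin (d + 1), s ≠ 0 → s ≠ Fin.last d → ρ s ≤ r) ∧
    ∃ G : ∀ s : Fin d, Fin (ρ s.castSucc) → Fin (n s) → Fin (ρ s.succ) → ℝ,
      ttEval n ρ G = B

/-- The CP max-qnorm `γ^CP`. -/
noncomputable def gammaCP {d : ℕ} (n : Fin d → ℕ) (A : (∀ s : Fin d, Fin (n s)) → ℝ) : ℝ :=
  sInf { y | ∃ (k : ℕ) (C : ∀ s : Fin d, Matrix (Fin (n s)) (Fin k) ℝ),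
    (∀ i, A i = ∑ α : Fin k, ∏ s : Fin d, C s (i s) α) ∧
    y = ∏ s : Fin d, (⨆ i : Fin (n s), Real.sqrt (∑ α, C s i α ^ 2)) }

end TT

/-!
At a multi-index `i`, a TT factorization evaluates to the single entry of the `1 × 1` matrix
product `G₁(:,i₁,:) ⋯ G_d(:,i_d,:)`. Submultiplicativity bounds the norm of this product by
`∏ ‖G_s‖_{∘,∞}`, and on `1 × 1` matrices `|m| ≤ ‖m‖_∘` because `‖1‖_∘ ≤ ‖1‖_∘²` forces
`‖1‖_∘ ≥ 1`. Hence `|A(i)| ≤ γ(A)`, which gives definiteness once we know that every tensor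
has some TT factorization: peel off one mode at a time, letting the rank index carry the
current mode index together with the row index still to be matched.
Homogeneity holds because scaling the first core by `c` turns factorizations of `A` into
factorizations of `c • A` and multiplies their cost by `|c|`.
-/

open scoped Pointwise

namespace TT

noncomputable def chainProd : {d : ℕ} → (ρ : Fin (d + 1) → ℕ) →
    (∀ s : Fin d, Matrix (Fin (ρ s.castSucc)) (Fin (ρ s.succ)) ℝ) →
    Matrix (Fin (ρ 0)) (Fin (ρ (Fin.last d))) ℝ
  | 0, ρ, _ => (1 : Matrix (Fin (ρ 0)) (Fin (ρ 0)) ℝ)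
  | _ + 1, ρ, M => M 0 * chainProd (fun t => ρ t.succ) (fun s => M s.succ)

theorem chainProd_apply {d : ℕ} (ρ : Fin (d + 1) → ℕ)
    (M : ∀ s : Fin d, Matrix (Fin (ρ s.castSucc)) (Fin (ρ s.succ)) ℝ)
    (a : Fin (ρ 0)) (b : Fin (ρ (Fin.last d))) :
    chainProd ρ M a b = ∑ α : ∀ t : Fin (d + 1), Fin (ρ t),
      if α 0 = a ∧ α (Fin.last d) = b then ∏ s, M s (α s.castSucc) (α s.succ) else 0 := by
  classical
  induction d with
  | zero =>
    rw [← (Fin.consEquiv fun t : Fin 1 => Fin (ρ t)).sum_comp, Fintype.sum_prod_type]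
    simp [chainProd, Matrix.one_apply, ite_and, eq_comm]
  | succ d ih =>
    rw [← (Fin.consEquiv fun t => Fin (ρ t)).sum_comp, Fintype.sum_prod_type]
    change ∑ c, M 0 a c * chainProd (fun t => ρ t.succ) (fun s => M s.succ) c b = _
    simp only [ih, Finset.mul_sum, Fin.consEquiv_apply, Fin.prod_univ_succ, Fin.cons_zero,
      Fin.castSucc_zero, ← Fin.succ_castSucc, ← Fin.succ_last, Fin.cons_succ]
    rw [Fintype.sum_eq_single a fun x hx => Finset.sum_eq_zero fun β _ => if_neg fun h => hx h.1,
      Finset.sum_comm]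
    refine Finset.sum_congr rfl fun β _ => ?_
    by_cases h : β (Fin.last d) = b
    · simp only [h, and_true, mul_ite, mul_zero]
      exact (Finset.sum_ite_eq _ _ _).trans (if_pos (Finset.mem_univ _))
    · simp [h]

def lateralSlice {p n q : ℕ} (G : Fin p → Fin n → Fin q → ℝ) (i : Fin n) :
    Matrix (Fin p) (Fin q) ℝ :=
  fun a b => G a i b

theorem ttEval_eq_chainProd {d : ℕ} (n : Fin d → ℕ) (ρ : Fin (d + 1) → ℕ)
    (G : ∀ s : Fin d, Fin (ρ s.castSucc) → Fin (n s) → Fin (ρ s.succ) → ℝ)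
    (h0 : ρ 0 = 1) (hlast : ρ (Fin.last d) = 1) (i : ∀ s, Fin (n s))
    (a : Fin (ρ 0)) (b : Fin (ρ (Fin.last d))) :
    ttEval n ρ G i = chainProd ρ (fun s => lateralSlice (G s) (i s)) a b := by
  have : Subsingleton (Fin (ρ 0)) := by rw [h0]; infer_instance
  have : Subsingleton (Fin (ρ (Fin.last d))) := by rw [hlast]; infer_instance
  rw [chainProd_apply]
  exact Finset.sum_congr rfl fun α _ =>
    (if_pos ⟨Subsingleton.elim _ _, Subsingleton.elim _ _⟩).symm

theorem exists_chainProd_eq {d : ℕ} (n : Fin (d + 1) → ℕ) (p : ℕ)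
    (B : (∀ s, Fin (n s)) → Fin p → ℝ) :
    ∃ (ρ : Fin (d + 2) → ℕ) (h0 : ρ 0 = p), ρ (Fin.last (d + 1)) = 1 ∧
      ∃ G : ∀ s : Fin (d + 1), Fin (ρ s.castSucc) → Fin (n s) → Fin (ρ s.succ) → ℝ,
        ∀ i a b, chainProd ρ (fun s => lateralSlice (G s) (i s)) a b = B i (Fin.cast h0 a) := by
  induction d generalizing p with
  | zero =>
    have hcons : ∀ i : ∀ s, Fin (n s), (Fin.cons (i 0) finZeroElim : ∀ s, Fin (n s)) = i :=
      fun i => funext fun s => Fin.cases rfl (fun t => t.elim0) s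
    let G0 : Fin p → Fin (n 0) → Fin 1 → ℝ := fun a j _ => B (Fin.cons j finZeroElim) a
    refine ⟨Fin.cons p fun _ => 1, rfl, rfl, Fin.cons G0 finZeroElim,
      fun i (a : Fin p) (b : Fin 1) => ?_⟩
    show (lateralSlice G0 (i 0) * (1 : Matrix (Fin 1) (Fin 1) ℝ)) a b = B i a
    rw [Matrix.mul_one]
    exact congrArg (B · a) (hcons i)
  | succ d ih =>
    -- the bond after the first core carries the pair (first mode index, row index)
    let e := (finProdFinEquiv (m := n 0) (n := p)).symm
    obtain ⟨ρ, h0, hlast, G, hG⟩ :=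
      ih (fun t => n t.succ) (n 0 * p) fun i k => B (Fin.cons (e k).1 i) (e k).2
    let G0 : Fin p → Fin (n 0) → Fin (ρ 0) → ℝ := fun a j c =>
      if e (Fin.cast h0 c) = (j, a) then 1 else 0
    refine ⟨Fin.cons p ρ, rfl, hlast, Fin.cons G0 G,
      fun i (a : Fin p) (b : Fin (ρ (Fin.last (d + 1)))) => ?_⟩
    show ∑ c : Fin (ρ 0), G0 a (i 0) c * chainProd ρ (fun s => lateralSlice (G s) (i s.succ)) c b
      = B i a
    simp only [hG]
    rw [← ((finCongr h0).trans e).symm.sum_comp]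
    simp only [Equiv.symm_trans, finCongr_symm, Equiv.trans_apply, finCongr_apply, Fin.cast_cast,
      Fin.cast_eq_self, Equiv.apply_symm_apply, ite_mul, one_mul, zero_mul, Finset.sum_ite_eq',
      Finset.mem_univ, ↓reduceIte, G0]
    exact congrArg (B · a) (Fin.cons_self_tail i)

theorem exists_ttEval_eq {d : ℕ} (hd : d ≠ 0) (n : Fin d → ℕ) (A : (∀ s, Fin (n s)) → ℝ) :
    ∃ ρ : Fin (d + 1) → ℕ, ρ 0 = 1 ∧ ρ (Fin.last d) = 1 ∧
      ∃ G : ∀ s : Fin d, Fin (ρ s.castSucc) → Fin (n s) → Fin (ρ s.succ) → ℝ,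
        ttEval n ρ G = A := by
  obtain ⟨d, rfl⟩ := Nat.exists_eq_succ_of_ne_zero hd
  obtain ⟨ρ, h0, hlast, G, hG⟩ := exists_chainProd_eq n 1 fun i _ => A i
  refine ⟨ρ, h0, hlast, G, funext fun i => ?_⟩
  rw [ttEval_eq_chainProd n ρ G h0 hlast i (Fin.cast h0.symm 0) (Fin.cast hlast.symm 0), hG]

theorem ttEval_smul_cores {d : ℕ} (n : Fin d → ℕ) (ρ : Fin (d + 1) → ℕ)
    (G : ∀ s : Fin d, Fin (ρ s.castSucc) → Fin (n s) → Fin (ρ s.succ) → ℝ) (w : Fin d → ℝ) :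
    ttEval n ρ (fun s => w s • G s) = (∏ s, w s) • ttEval n ρ G := by
  funext i
  simp only [ttEval, Pi.smul_apply, smul_eq_mul, Finset.prod_mul_distrib, Finset.mul_sum]

section MatrixNorm

variable {ν : ∀ p q : ℕ, Matrix (Fin p) (Fin q) ℝ → ℝ}

theorem nu_chainProd_le (hnonneg : ∀ p q (A : Matrix (Fin p) (Fin q) ℝ), 0 ≤ ν p q A)
    (hsub : ∀ p q r (A : Matrix (Fin p) (Fin q) ℝ) (B : Matrix (Fin q) (Fin r) ℝ),
      ν p r (A * B) ≤ ν p q A * ν q r B)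
    {d : ℕ} (ρ : Fin (d + 2) → ℕ)
    (M : ∀ s : Fin (d + 1), Matrix (Fin (ρ s.castSucc)) (Fin (ρ s.succ)) ℝ) :
    ν _ _ (chainProd ρ M) ≤ ∏ s, ν _ _ (M s) := by
  induction d with
  | zero =>
    rw [Fin.prod_univ_one]
    exact le_of_eq (congrArg (ν _ _) (Matrix.mul_one _))
  | succ d ih =>
    rw [Fin.prod_univ_succ]
    exact (hsub _ _ _ _ _).trans
      (mul_le_mul_of_nonneg_left (ih (fun t => ρ t.succ) fun s => M s.succ) (hnonneg _ _ _))

theorem one_le_nu_one (hnonneg : ∀ p q (A : Matrix (Fin p) (Fin q) ℝ), 0 ≤ ν p q A)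
    (hdef : ∀ p q (A : Matrix (Fin p) (Fin q) ℝ), ν p q A = 0 ↔ A = 0)
    (hsub : ∀ p q r (A : Matrix (Fin p) (Fin q) ℝ) (B : Matrix (Fin q) (Fin r) ℝ),
      ν p r (A * B) ≤ ν p q A * ν q r B) :
    1 ≤ ν 1 1 1 := by
  have hpos : 0 < ν 1 1 1 :=
    (hnonneg 1 1 1).lt_of_ne' fun h => one_ne_zero ((hdef 1 1 1).mp h)
  have := hsub 1 1 1 1 1
  rw [Matrix.one_mul] at this
  nlinarith

theorem abs_apply_le_nu (hnonneg : ∀ p q (A : Matrix (Fin p) (Fin q) ℝ), 0 ≤ ν p q A)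
    (hdef : ∀ p q (A : Matrix (Fin p) (Fin q) ℝ), ν p q A = 0 ↔ A = 0)
    (hhom : ∀ p q (c : ℝ) (A : Matrix (Fin p) (Fin q) ℝ), ν p q (c • A) = |c| * ν p q A)
    (hsub : ∀ p q r (A : Matrix (Fin p) (Fin q) ℝ) (B : Matrix (Fin q) (Fin r) ℝ),
      ν p r (A * B) ≤ ν p q A * ν q r B)
    {p q : ℕ} (hp : p = 1) (hq : q = 1) (M : Matrix (Fin p) (Fin q) ℝ) (a : Fin p) (b : Fin q) :
    |M a b| ≤ ν p q M := by
  subst hp hq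
  have hM : M = M a b • 1 := by
    ext x y
    simp [Subsingleton.elim x a, Subsingleton.elim y a, Subsingleton.elim b a]
  calc |M a b| ≤ |M a b| * ν 1 1 1 :=
        le_mul_of_one_le_right (abs_nonneg _) (one_le_nu_one hnonneg hdef hsub)
    _ = ν 1 1 M := by rw [← hhom, ← hM]

theorem nu_lateralSlice_le {p n q : ℕ} (G : Fin p → Fin n → Fin q → ℝ) (i : Fin n) :
    ν p q (lateralSlice G i) ≤ sliceNormInf ν G :=
  le_ciSup (f := fun i => ν p q (lateralSlice G i)) (Finite.bddAbove_range _) i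

theorem sliceNormInf_nonneg (hnonneg : ∀ p q (A : Matrix (Fin p) (Fin q) ℝ), 0 ≤ ν p q A)
    {p n q : ℕ} (G : Fin p → Fin n → Fin q → ℝ) : 0 ≤ sliceNormInf ν G :=
  Real.iSup_nonneg fun _ => hnonneg _ _ _

theorem sliceNormInf_smul
    (hhom : ∀ p q (c : ℝ) (A : Matrix (Fin p) (Fin q) ℝ), ν p q (c • A) = |c| * ν p q A)
    (c : ℝ) {p n q : ℕ} (G : Fin p → Fin n → Fin q → ℝ) :
    sliceNormInf ν (c • G) = |c| * sliceNormInf ν G := by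
  rw [sliceNormInf, sliceNormInf, Real.mul_iSup_of_nonneg (abs_nonneg c)]
  exact congrArg iSup (funext fun i => hhom p q c (lateralSlice G i))

theorem abs_ttEval_le (hnonneg : ∀ p q (A : Matrix (Fin p) (Fin q) ℝ), 0 ≤ ν p q A)
    (hdef : ∀ p q (A : Matrix (Fin p) (Fin q) ℝ), ν p q A = 0 ↔ A = 0)
    (hhom : ∀ p q (c : ℝ) (A : Matrix (Fin p) (Fin q) ℝ), ν p q (c • A) = |c| * ν p q A)
    (hsub : ∀ p q r (A : Matrix (Fin p) (Fin q) ℝ) (B : Matrix (Fin q) (Fin r) ℝ),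
      ν p r (A * B) ≤ ν p q A * ν q r B)
    {d : ℕ} (hd : d ≠ 0) (n : Fin d → ℕ) (ρ : Fin (d + 1) → ℕ)
    (G : ∀ s : Fin d, Fin (ρ s.castSucc) → Fin (n s) → Fin (ρ s.succ) → ℝ)
    (h0 : ρ 0 = 1) (hlast : ρ (Fin.last d) = 1) (i : ∀ s, Fin (n s)) :
    |ttEval n ρ G i| ≤ ∏ s, sliceNormInf ν (G s) := by
  obtain ⟨d, rfl⟩ := Nat.exists_eq_succ_of_ne_zero hd
  let a : Fin (ρ 0) := Fin.cast h0.symm 0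
  let b : Fin (ρ (Fin.last (d + 1))) := Fin.cast hlast.symm 0
  rw [ttEval_eq_chainProd n ρ G h0 hlast i a b]
  calc _ ≤ ν _ _ (chainProd ρ fun s => lateralSlice (G s) (i s)) :=
        abs_apply_le_nu hnonneg hdef hhom hsub h0 hlast _ a b
    _ ≤ ∏ s, ν _ _ (lateralSlice (G s) (i s)) := nu_chainProd_le hnonneg hsub ρ _
    _ ≤ ∏ s, sliceNormInf ν (G s) :=
        Finset.prod_le_prod (fun _ _ => hnonneg _ _ _) fun s _ => nu_lateralSlice_le _ _

def ttCosts {d : ℕ} (n : Fin d → ℕ) (ν : ∀ p q : ℕ, Matrix (Fin p) (Fin q) ℝ → ℝ)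
    (A : (∀ s : Fin d, Fin (n s)) → ℝ) : Set ℝ :=
  { y | ∃ ρ : Fin (d + 1) → ℕ, ρ 0 = 1 ∧ ρ (Fin.last d) = 1 ∧
    ∃ G : ∀ s : Fin d, Fin (ρ s.castSucc) → Fin (n s) → Fin (ρ s.succ) → ℝ,
      ttEval n ρ G = A ∧ y = ∏ s : Fin d, sliceNormInf ν (G s) }

theorem gammaTT_eq_sInf_ttCosts {d : ℕ} (n : Fin d → ℕ) (A : (∀ s : Fin d, Fin (n s)) → ℝ) :
    gammaTT n ν A = sInf (ttCosts n ν A) :=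
  rfl

section ttCosts

variable {d : ℕ} {n : Fin d → ℕ} {A : (∀ s : Fin d, Fin (n s)) → ℝ}

theorem ttCosts_nonempty (hd : d ≠ 0) : (ttCosts n ν A).Nonempty := by
  obtain ⟨ρ, h0, hlast, G, hG⟩ := exists_ttEval_eq hd n A
  exact ⟨_, ρ, h0, hlast, G, hG, rfl⟩

theorem nonneg_of_mem_ttCosts (hnonneg : ∀ p q (A : Matrix (Fin p) (Fin q) ℝ), 0 ≤ ν p q A)
    {y : ℝ} (hy : y ∈ ttCosts n ν A) : 0 ≤ y := by
  obtain ⟨ρ, -, -, G, -, rfl⟩ := hy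
  exact Finset.prod_nonneg fun s _ => sliceNormInf_nonneg hnonneg (G s)

theorem abs_apply_le_of_mem_ttCosts (hnonneg : ∀ p q (A : Matrix (Fin p) (Fin q) ℝ), 0 ≤ ν p q A)
    (hdef : ∀ p q (A : Matrix (Fin p) (Fin q) ℝ), ν p q A = 0 ↔ A = 0)
    (hhom : ∀ p q (c : ℝ) (A : Matrix (Fin p) (Fin q) ℝ), ν p q (c • A) = |c| * ν p q A)
    (hsub : ∀ p q r (A : Matrix (Fin p) (Fin q) ℝ) (B : Matrix (Fin q) (Fin r) ℝ),
      ν p r (A * B) ≤ ν p q A * ν q r B)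
    (hd : d ≠ 0) {y : ℝ} (hy : y ∈ ttCosts n ν A) (i : ∀ s, Fin (n s)) : |A i| ≤ y := by
  obtain ⟨ρ, h0, hlast, G, rfl, rfl⟩ := hy
  exact abs_ttEval_le hnonneg hdef hhom hsub hd n ρ G h0 hlast i

theorem abs_mul_mem_ttCosts_smul
    (hhom : ∀ p q (c : ℝ) (A : Matrix (Fin p) (Fin q) ℝ), ν p q (c • A) = |c| * ν p q A)
    (hd : d ≠ 0) {y : ℝ} (hy : y ∈ ttCosts n ν A) (c : ℝ) : |c| * y ∈ ttCosts n ν (c • A) := by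
  obtain ⟨ρ, h0, hlast, G, rfl, rfl⟩ := hy
  let w : Fin d → ℝ := Pi.mulSingle ⟨0, Nat.pos_of_ne_zero hd⟩ c
  refine ⟨ρ, h0, hlast, fun s => w s • G s, ?_, ?_⟩
  · rw [ttEval_smul_cores, Fintype.prod_pi_mulSingle']
  · simp only [sliceNormInf_smul hhom, Finset.prod_mul_distrib, ← Finset.abs_prod, w,
      Fintype.prod_pi_mulSingle']

theorem ttCosts_smul
    (hhom : ∀ p q (c : ℝ) (A : Matrix (Fin p) (Fin q) ℝ), ν p q (c • A) = |c| * ν p q A)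
    (hd : d ≠ 0) {c : ℝ} (hc : c ≠ 0) : ttCosts n ν (c • A) = |c| • ttCosts n ν A := by
  ext y
  refine ⟨fun hy => ⟨|c⁻¹| * y, ?_, ?_⟩, ?_⟩
  · simpa [smul_smul, hc] using abs_mul_mem_ttCosts_smul hhom hd hy c⁻¹
  · simp [abs_inv, hc]
  · rintro ⟨z, hz, rfl⟩
    exact abs_mul_mem_ttCosts_smul hhom hd hz c

theorem abs_apply_le_gammaTT (hnonneg : ∀ p q (A : Matrix (Fin p) (Fin q) ℝ), 0 ≤ ν p q A)
    (hdef : ∀ p q (A : Matrix (Fin p) (Fin q) ℝ), ν p q A = 0 ↔ A = 0)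
    (hhom : ∀ p q (c : ℝ) (A : Matrix (Fin p) (Fin q) ℝ), ν p q (c • A) = |c| * ν p q A)
    (hsub : ∀ p q r (A : Matrix (Fin p) (Fin q) ℝ) (B : Matrix (Fin q) (Fin r) ℝ),
      ν p r (A * B) ≤ ν p q A * ν q r B)
    (hd : d ≠ 0) (i : ∀ s, Fin (n s)) : |A i| ≤ gammaTT n ν A :=
  le_csInf (ttCosts_nonempty hd) fun _ hy =>
    abs_apply_le_of_mem_ttCosts hnonneg hdef hhom hsub hd hy i

theorem gammaTT_zero (hnonneg : ∀ p q (A : Matrix (Fin p) (Fin q) ℝ), 0 ≤ ν p q A)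
    (hhom : ∀ p q (c : ℝ) (A : Matrix (Fin p) (Fin q) ℝ), ν p q (c • A) = |c| * ν p q A)
    (hd : d ≠ 0) : gammaTT n ν (0 : (∀ s : Fin d, Fin (n s)) → ℝ) = 0 := by
  obtain ⟨y, hy⟩ := ttCosts_nonempty (n := n) (ν := ν) (A := 0) hd
  have hzero : (0 : ℝ) ∈ ttCosts n ν 0 := by
    simpa using abs_mul_mem_ttCosts_smul hhom hd hy 0
  exact IsLeast.csInf_eq ⟨hzero, fun _ => nonneg_of_mem_ttCosts hnonneg⟩

theorem gammaTT_smul (hnonneg : ∀ p q (A : Matrix (Fin p) (Fin q) ℝ), 0 ≤ ν p q A)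
    (hhom : ∀ p q (c : ℝ) (A : Matrix (Fin p) (Fin q) ℝ), ν p q (c • A) = |c| * ν p q A)
    (hd : d ≠ 0) (c : ℝ) : gammaTT n ν (c • A) = |c| * gammaTT n ν A := by
  rcases eq_or_ne c 0 with rfl | hc
  · rw [zero_smul, gammaTT_zero hnonneg hhom hd, abs_zero, zero_mul]
  · rw [gammaTT_eq_sInf_ttCosts, ttCosts_smul hhom hd hc,
      Real.sInf_smul_of_nonneg (abs_nonneg c), smul_eq_mul, gammaTT_eq_sInf_ttCosts]

end ttCosts

end MatrixNorm

theorem gammaTT_definite_and_homogeneous_general {d : ℕ} (hd : 2 ≤ d) (n : Fin d → ℕ)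
    (ν : ∀ p q : ℕ, Matrix (Fin p) (Fin q) ℝ → ℝ)
    (hnonneg : ∀ p q (A : Matrix (Fin p) (Fin q) ℝ), 0 ≤ ν p q A)
    (hdef : ∀ p q (A : Matrix (Fin p) (Fin q) ℝ), ν p q A = 0 ↔ A = 0)
    (hhom : ∀ p q (c : ℝ) (A : Matrix (Fin p) (Fin q) ℝ), ν p q (c • A) = |c| * ν p q A)
    (hsub : ∀ p q r (A : Matrix (Fin p) (Fin q) ℝ) (B : Matrix (Fin q) (Fin r) ℝ),
      ν p r (A * B) ≤ ν p q A * ν q r B)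
    (A : (∀ s : Fin d, Fin (n s)) → ℝ) :
    (gammaTT n ν A = 0 ↔ A = 0) ∧
    (∀ c : ℝ, gammaTT n ν (c • A) = |c| * gammaTT n ν A) := by
  have hd0 : d ≠ 0 := by omega
  refine ⟨⟨fun h => funext fun i => ?_, fun h => h ▸ gammaTT_zero hnonneg hhom hd0⟩,
    gammaTT_smul hnonneg hhom hd0⟩
  exact abs_nonpos_iff.mp (h ▸ abs_apply_le_gammaTT (A := A) hnonneg hdef hhom hsub hd0 i)

/-- Properties of the TT factorization quasinorm associated with a submultiplicative
matrix norm: definiteness and absolute homogeneity. -/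
theorem gammaTT_definite_and_homogeneous {d : ℕ} (hd : 2 ≤ d) (n : Fin d → ℕ)
    (ν : ∀ p q : ℕ, Matrix (Fin p) (Fin q) ℝ → ℝ)
    (hnonneg : ∀ p q (A : Matrix (Fin p) (Fin q) ℝ), 0 ≤ ν p q A)
    (hdef : ∀ p q (A : Matrix (Fin p) (Fin q) ℝ), ν p q A = 0 ↔ A = 0)
    (hhom : ∀ p q (c : ℝ) (A : Matrix (Fin p) (Fin q) ℝ), ν p q (c • A) = |c| * ν p q A)
    (htri : ∀ p q (A B : Matrix (Fin p) (Fin q) ℝ), ν p q (A + B) ≤ ν p q A + ν p q B)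
    (hsub : ∀ p q r (A : Matrix (Fin p) (Fin q) ℝ) (B : Matrix (Fin q) (Fin r) ℝ),
      ν p r (A * B) ≤ ν p q A * ν q r B)
    (A : (∀ s : Fin d, Fin (n s)) → ℝ) :
    (gammaTT n ν A = 0 ↔ A = 0) ∧
    (∀ c : ℝ, gammaTT n ν (c • A) = |c| * gammaTT n ν A) :=
  gammaTT_definite_and_homogeneous_general hd n ν hnonneg hdef hhom hsub A

end TT
end

section
/- Let ∅ ≠ Ω ⊆ [N] and π = {℧_τ}_{τ=1}^κ ∈ 𝔓_κ(Ω ⊕ Ω). For ω ∈ Ω define θ_{π,ω} = 1/2 if ω and ω+N belong to the same cell of π, and θ_{π,ω} = 0 otherwise. For every τ ∈ [κ], let Ω_τ = (℧_τ ∪ (℧_τ − N)) ∩ Ω. Then for every m ∈ ℕ^N and every collection of partial arrays {C^{(τ)}}_{τ=1}^κ with C^{(τ)} ∈ ℝ^m(Ω_τ), it holds that Σ_{i∈𝔍^m(Ω)} Π_{τ∈[κ]} C^{(τ)}_{i_{Ω_τ}} ≤ Π_{ω∈Ω} m_ω^{θ_{π,ω}} · Π_{τ∈[κ]} ‖C^{(τ)}‖_F.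 -/
open scoped BigOperators Classical

namespace PArray

variable {ι : Type} [DecidableEq ι]

/-- A partial index on `Ω` with dimensions `m`: a map `i : Ω → ℕ` with `i_ω ∈ [m_ω]`. -/
abbrev PIdx (m : ι → ℕ) (Ω : Finset ι) : Type := ∀ ω : Ω, Fin (m ω.val)

/-- A partial array on `Ω`: a map `𝔍^m(Ω) → ℝ`. -/
abbrev PArr (m : ι → ℕ) (Ω : Finset ι) : Type := PIdx m Ω → ℝ

/-- Join `i ⊔ j` of two partial indices (on disjoint sets, the first takes precedence). -/
def pjoin {m : ι → ℕ} {Ω₁ Ω₂ : Finset ι} (i : PIdx m Ω₁) (j : PIdx m Ω₂) :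
    PIdx m (Ω₁ ∪ Ω₂) := fun ω =>
  if h : ω.val ∈ Ω₁ then i ⟨ω.val, h⟩
  else j ⟨ω.val, (Finset.mem_union.mp ω.property).resolve_left h⟩

/-- Transport of a partial index along an equality of index sets. -/
def pcast {m : ι → ℕ} {Ω₁ Ω₂ : Finset ι} (h : Ω₁ = Ω₂) (i : PIdx m Ω₁) : PIdx m Ω₂ :=
  fun ω => i ⟨ω.val, by rw [h]; exact ω.property⟩

/-- Restriction `i_{Ω'}` of a partial index to a subset. -/
def prestrict {m : ι → ℕ} {Ω Ω' : Finset ι} (h : Ω' ⊆ Ω) (i : PIdx m Ω) : PIdx m Ω' :=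
  fun ω => i ⟨ω.val, h ω.property⟩

/-- Frobenius norm `‖D‖_F` of a partial array. -/
noncomputable def pfrobNorm {m : ι → ℕ} {Ω : Finset ι} (D : PArr m Ω) : ℝ :=
  Real.sqrt (∑ i : PIdx m Ω, (D i) ^ 2)

/-- Partial Frobenius norm `‖D‖_{F(Ω')} ∈ ℝ^m(Ω \ Ω')`. -/
noncomputable def pfrob {m : ι → ℕ} {Ω Ω' : Finset ι} (h : Ω' ⊆ Ω) (D : PArr m Ω) :
    PArr m (Ω \ Ω') := fun i =>
  Real.sqrt (∑ j : PIdx m Ω',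
    (D (pcast (Finset.sdiff_union_of_subset h) (pjoin i j))) ^ 2)

/-- The doubled index set `Ω' ⊕ Ω''` (disjoint union inside `ι ⊕ ι`). -/
def oplus (Ω' Ω'' : Finset ι) : Finset (ι ⊕ ι) :=
  Ω'.map ⟨Sum.inl, Sum.inl_injective⟩ ∪ Ω''.map ⟨Sum.inr, Sum.inr_injective⟩

/-- Doubled dimension tuple `m^{×2}`. -/
abbrev mdup (m : ι → ℕ) : ι ⊕ ι → ℕ := Sum.elim m m

theorem inl_mem_oplus {Ω' Ω'' : Finset ι} {a : ι} (h : a ∈ Ω') :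
    Sum.inl a ∈ oplus Ω' Ω'' :=
  Finset.mem_union_left _ (Finset.mem_map_of_mem _ h)

theorem inr_mem_oplus {Ω' Ω'' : Finset ι} {a : ι} (h : a ∈ Ω'') :
    Sum.inr a ∈ oplus Ω' Ω'' :=
  Finset.mem_union_right _ (Finset.mem_map_of_mem _ h)

theorem mem_of_inl_mem_oplus {Ω' Ω'' : Finset ι} {a : ι} (h : Sum.inl a ∈ oplus Ω' Ω'') :
    a ∈ Ω' := by
  rcases Finset.mem_union.mp h with h1 | h2
  · rcases Finset.mem_map.mp h1 with ⟨b, hb, hba⟩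
    simp only [Function.Embedding.coeFn_mk] at hba
    rcases hba
    exact hb
  · rcases Finset.mem_map.mp h2 with ⟨b, hb, hba⟩
    simp at hba

theorem mem_of_inr_mem_oplus {Ω' Ω'' : Finset ι} {a : ι} (h : Sum.inr a ∈ oplus Ω' Ω'') :
    a ∈ Ω'' := by
  rcases Finset.mem_union.mp h with h1 | h2
  · rcases Finset.mem_map.mp h1 with ⟨b, hb, hba⟩
    simp at hba
  · rcases Finset.mem_map.mp h2 with ⟨b, hb, hba⟩
    simp only [Function.Embedding.coeFn_mk] at hba
    rcases hba
    exact hb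

/-- Concatenation `i ⌢ j ∈ 𝔍^{m^{×2}}(Ω' ⊕ Ω'')` of partial indices. -/
def pcat {m : ι → ℕ} {Ω' Ω'' : Finset ι} (i : PIdx m Ω') (j : PIdx m Ω'') :
    PIdx (mdup m) (oplus Ω' Ω'') := fun ω =>
  Sum.rec (motive := fun x => x ∈ oplus Ω' Ω'' → Fin (mdup m x))
    (fun a h => i ⟨a, mem_of_inl_mem_oplus h⟩)
    (fun a h => j ⟨a, mem_of_inr_mem_oplus h⟩) ω.val ω.property

/-- First (unprimed) component of an index on `Ω' ⊕ Ω''`. -/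
def pleft {m : ι → ℕ} {Ω' Ω'' : Finset ι} (κ : PIdx (mdup m) (oplus Ω' Ω'')) : PIdx m Ω' :=
  fun ω => κ ⟨Sum.inl ω.val, inl_mem_oplus ω.property⟩

/-- Second (primed) component of an index on `Ω' ⊕ Ω''`. -/
def pright {m : ι → ℕ} {Ω' Ω'' : Finset ι} (κ : PIdx (mdup m) (oplus Ω' Ω'')) : PIdx m Ω'' :=
  fun ω => κ ⟨Sum.inr ω.val, inr_mem_oplus ω.property⟩

/-- Transport of a partial array along an equality of index sets. -/
def parrCast {ι' : Type} {m : ι' → ℕ} {S₁ S₂ : Finset ι'} (h : S₁ = S₂) (C : PArr m S₁) :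
    PArr m S₂ := fun κ => C (pcast h.symm κ)

/-- Partial trace `C^⟨Ω'⟩` of an array `C ∈ ℝ^{m^{×2}}(Ω ⊕ Ω)` along `Ω' ⊆ Ω`. -/
noncomputable def ptrace {m : ι → ℕ} {Ω Ω' : Finset ι} (h : Ω' ⊆ Ω)
    (C : PArr (mdup m) (oplus Ω Ω)) : PArr (mdup m) (oplus (Ω \ Ω') (Ω \ Ω')) := fun κ =>
  ∑ ℓ : PIdx m Ω',
    C (pcast (by rw [Finset.sdiff_union_of_subset h])
        (pcat (pjoin (pleft κ) ℓ) (pjoin (pright κ) ℓ)))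

/-- `P` is a partition of the set `S` into mutually disjoint non-empty cells. -/
def IsPartition {α : Type} [DecidableEq α] (S : Finset α) (P : Finset (Finset α)) : Prop :=
  (∀ c ∈ P, c.Nonempty) ∧ (∀ c ∈ P, ∀ c' ∈ P, c ≠ c' → c ∩ c' = ∅) ∧ P.biUnion id = S

/-- The norm `‖C‖_π` associated with a partition `P` of the index set `S`. -/
noncomputable def partNorm {α : Type} [DecidableEq α] (m : α → ℕ) (S : Finset α)
    (P : Finset (Finset α)) (C : PArr m S) : ℝ :=
  sSup { y | ∃ Z : ∀ c : Finset α, PArr m (c ∩ S),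
    (∀ c ∈ P, pfrobNorm (Z c) = 1) ∧
    y = ∑ i : PIdx m S, C i * ∏ c ∈ P, Z c (prestrict Finset.inter_subset_right i) }

/-- `θ_{π,ω}`: `1/2` if `ω` and its primed copy lie in the same cell of the partition, else `0`. -/
noncomputable def theta (P : Finset (Finset (ι ⊕ ι))) (ω : ι) : ℝ :=
  if ∃ c ∈ P, Sum.inl ω ∈ c ∧ Sum.inr ω ∈ c then 1 / 2 else 0

/-- `℧ ∪ (℧ − N)`: the set of base positions hit by a cell of the doubled index set. -/
def flatten [Fintype ι] (c : Finset (ι ⊕ ι)) : Finset ι :=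
  Finset.univ.filter (fun a => Sum.inl a ∈ c ∨ Sum.inr a ∈ c)

end PArray

/-! Each `ω ∈ Ω` lies in at most two of the sets `Ω_τ`, namely those of the cells containing
`ω` and `ω + N`, and in exactly one iff `θ_{π,ω} = 1/2`. Sum out the coordinates of `i` one at a
time. In the sum over `i_ω` at most two factors depend on `i_ω`, so Cauchy–Schwarz bounds it by
`√m_ω` times the partial Frobenius norm `‖C‖_{F({ω})}` of the single factor, or by the product of
the two partial norms. Replacing these factors by their partial norms leaves every Frobenius norm
unchanged, and induction on `Ω` gives the bound with the weight `√m_ω ^ (2 - #{τ | ω ∈ Ω_τ})`,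
which is `m_ω ^ θ_{π,ω}`. -/

namespace PArray

open Finset Function

theorem sum_prod_le_sqrt_card_pow_mul_prod_sqrt {α γ : Type*} (s : Finset α) (D : Finset γ)
    (hD : #D ≤ 2) (f : γ → α → ℝ) :
    ∑ x ∈ s, ∏ c ∈ D, f c x ≤ √(#s) ^ (2 - #D) * ∏ c ∈ D, √(∑ x ∈ s, f c x ^ 2) := by
  classical
  interval_cases h : #D
  · simp [card_eq_zero.mp h]
  · obtain ⟨c, rfl⟩ := card_eq_one.mp h
    simpa using Real.sum_mul_le_sqrt_mul_sqrt s (fun _ => 1) (f c)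
  · obtain ⟨a, b, hab, rfl⟩ := card_eq_two.mp h
    simpa [prod_pair hab] using Real.sum_mul_le_sqrt_mul_sqrt s (f a) (f b)

section Box

variable {ι γ : Type} [DecidableEq ι]

def restr (S : Finset ι) (i : ι → ℕ) : ι → ℕ := fun ω => if ω ∈ S then i ω else 0

theorem restr_update_of_notMem {T : Finset ι} {ω : ι} (hω : ω ∉ T) (i : ι → ℕ) (x : ℕ) :
    restr T (update i ω x) = restr T i := by
  ext a
  by_cases ha : a = ω
  · subst ha; simp [restr, hω]
  · simp [restr, ha]

theorem restr_update_of_mem {T : Finset ι} {ω : ι} (hω : ω ∈ T) (i : ι → ℕ) (x : ℕ) :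
    restr T (update i ω x) = update (restr (T.erase ω) i) ω x := by
  ext a
  by_cases ha : a = ω
  · subst ha; simp [restr, hω]
  · simp [restr, ha]

/-- The partial Frobenius norm `‖f‖_{F({ω})}`, evaluated at the remaining coordinates of `j`. -/
noncomputable def sliceNorm (m : ι → ℕ) (ω : ι) (f : (ι → ℕ) → ℝ) (j : ι → ℕ) : ℝ :=
  √(∑ x ∈ range (m ω), f (update j ω x) ^ 2)

theorem sum_range_prod_restr_update_le (m : ι → ℕ) (P : Finset γ) (T : γ → Finset ι)
    (h : γ → (ι → ℕ) → ℝ) (hh : ∀ c ∈ P, ∀ j, 0 ≤ h c j) {ω : ι}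
    (hdeg : #{c ∈ P | ω ∈ T c} ≤ 2) (i : ι → ℕ) :
    ∑ x ∈ range (m ω), ∏ c ∈ P, h c (restr (T c) (update i ω x)) ≤
      √(m ω) ^ (2 - #{c ∈ P | ω ∈ T c}) *
        ∏ c ∈ P, (if ω ∈ T c then sliceNorm m ω (h c) else h c) (restr ((T c).erase ω) i) := by
  set K := ∏ c ∈ P with ω ∉ T c, h c (restr (T c) i)
  have hK : 0 ≤ K := prod_nonneg fun c hc => hh c (mem_filter.1 hc).1 _
  have hsplit : ∀ x, ∏ c ∈ P, h c (restr (T c) (update i ω x)) =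
      (∏ c ∈ P with ω ∈ T c, h c (update (restr ((T c).erase ω) i) ω x)) * K := by
    intro x
    rw [← prod_filter_mul_prod_filter_not P (fun c => ω ∈ T c)]
    congr 1
    · exact prod_congr rfl fun c hc => by rw [restr_update_of_mem (mem_filter.1 hc).2]
    · exact prod_congr rfl fun c hc => by rw [restr_update_of_notMem (mem_filter.1 hc).2]
  have hrhs : ∏ c ∈ P, (if ω ∈ T c then sliceNorm m ω (h c) else h c) (restr ((T c).erase ω) i)
      = (∏ c ∈ P with ω ∈ T c, sliceNorm m ω (h c) (restr ((T c).erase ω) i)) * K := by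
    rw [← prod_filter_mul_prod_filter_not P (fun c => ω ∈ T c)]
    congr 1
    · exact prod_congr rfl fun c hc => by rw [if_pos (mem_filter.1 hc).2]
    · refine prod_congr rfl fun c hc => ?_
      have hωc := (mem_filter.1 hc).2
      rw [if_neg hωc, erase_eq_of_notMem hωc]
  rw [hrhs, ← mul_assoc]
  simp only [hsplit, ← sum_mul]
  gcongr
  simpa [sliceNorm] using sum_prod_le_sqrt_card_pow_mul_prod_sqrt (range (m ω)) _ hdeg
    fun c x => h c (update (restr ((T c).erase ω) i) ω x)

variable [Fintype ι]

/-- Partial indices on `S`, encoded as total functions `ι → ℕ` that vanish off `S`. -/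
def box (m : ι → ℕ) (S : Finset ι) : Finset (ι → ℕ) :=
  Fintype.piFinset fun ω => if ω ∈ S then range (m ω) else {0}

theorem mem_box {m : ι → ℕ} {S : Finset ι} {i : ι → ℕ} :
    i ∈ box m S ↔ ∀ ω, (ω ∈ S → i ω < m ω) ∧ (ω ∉ S → i ω = 0) := by
  refine Fintype.mem_piFinset.trans (forall_congr' fun ω => ?_)
  by_cases hω : ω ∈ S <;> simp [hω]

theorem box_empty (m : ι → ℕ) : box m ∅ = {0} := by
  ext i
  simp [mem_box, funext_iff]

theorem sum_box_insert {M : Type*} [AddCommMonoid M] (m : ι → ℕ) {ω : ι} {S : Finset ι}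
    (hω : ω ∉ S) (F : (ι → ℕ) → M) :
    ∑ i ∈ box m (insert ω S), F i = ∑ x ∈ range (m ω), ∑ i ∈ box m S, F (update i ω x) := by
  rw [← sum_product']
  refine sum_nbij' (fun i => (i ω, update i ω 0)) (fun p => update p.2 ω p.1) ?_ ?_ ?_ ?_ ?_
  · intro i hi
    simp only [mem_product, mem_range, mem_box, mem_insert] at hi ⊢
    refine ⟨(hi ω).1 (Or.inl rfl), fun a => ?_⟩
    by_cases ha : a = ω
    · subst ha; simp [hω]
    · simpa [ha] using hi a
  · rintro ⟨x, i⟩ hi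
    simp only [mem_product, mem_range, mem_box, mem_insert] at hi ⊢
    intro a
    by_cases ha : a = ω
    · subst ha; simpa using hi.1
    · simpa [ha] using hi.2 a
  · intro i _
    simp
  · rintro ⟨x, i⟩ hi
    simp only [mem_product, mem_box] at hi
    simp [← (hi.2 ω).2 hω]
  · intro i _
    simp

theorem sum_sq_sliceNorm (m : ι → ℕ) {ω : ι} {T : Finset ι} (hω : ω ∈ T) (f : (ι → ℕ) → ℝ) :
    ∑ j ∈ box m (T.erase ω), sliceNorm m ω f j ^ 2 = ∑ j ∈ box m T, f j ^ 2 := by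
  conv_rhs => rw [← insert_erase hω, sum_box_insert m (notMem_erase ω T), sum_comm]
  simp only [sliceNorm]
  exact sum_congr rfl fun j _ => Real.sq_sqrt (sum_nonneg fun _ _ => sq_nonneg _)

theorem sum_box_prod_restr_le (m : ι → ℕ) (P : Finset γ) (S : Finset ι) (T : γ → Finset ι)
    (h : γ → (ι → ℕ) → ℝ) (hT : ∀ c ∈ P, T c ⊆ S) (hh : ∀ c ∈ P, ∀ j, 0 ≤ h c j)
    (hdeg : ∀ ω ∈ S, #{c ∈ P | ω ∈ T c} ≤ 2) :
    ∑ i ∈ box m S, ∏ c ∈ P, h c (restr (T c) i) ≤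
      (∏ ω ∈ S, √(m ω) ^ (2 - #{c ∈ P | ω ∈ T c})) *
        ∏ c ∈ P, √(∑ j ∈ box m (T c), h c j ^ 2) := by
  induction S using Finset.induction_on generalizing T h with
  | empty =>
    have hT0 : ∀ c ∈ P, T c = ∅ := fun c hc => subset_empty.mp (hT c hc)
    rw [box_empty, sum_singleton, prod_empty, one_mul]
    refine prod_le_prod (fun c hc => hh c hc _) fun c hc => ?_
    rw [hT0 c hc, box_empty, sum_singleton, Real.sqrt_sq (hh c hc _)]
    exact le_of_eq (congrArg (h c) (by ext; simp [restr]))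
  | @insert ω S hω ih =>
    set h' : γ → (ι → ℕ) → ℝ := fun c => if ω ∈ T c then sliceNorm m ω (h c) else h c
    have hdeg' : ∀ a ∈ S, #{c ∈ P | a ∈ (T c).erase ω} = #{c ∈ P | a ∈ T c} := by
      intro a ha
      have hne : a ≠ ω := fun hae => hω (hae ▸ ha)
      simp [mem_erase, hne]
    have hnorm : ∀ c, ∑ j ∈ box m ((T c).erase ω), h' c j ^ 2 = ∑ j ∈ box m (T c), h c j ^ 2 := by
      intro c
      by_cases hωc : ω ∈ T c
      · simp only [h', if_pos hωc, sum_sq_sliceNorm m hωc]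
      · simp only [h', if_neg hωc, erase_eq_of_notMem hωc]
    have hIH := ih (fun c => (T c).erase ω) h'
      (fun c hc => (subset_insert_iff.mp (hT c hc)))
      (fun c hc j => by
        by_cases hωc : ω ∈ T c
        · simp only [h', if_pos hωc, sliceNorm]; positivity
        · simp only [h', if_neg hωc]; exact hh c hc j)
      (fun a ha => (hdeg' a ha).trans_le (hdeg a (mem_insert_of_mem ha)))
    calc ∑ i ∈ box m (insert ω S), ∏ c ∈ P, h c (restr (T c) i)
        = ∑ i ∈ box m S, ∑ x ∈ range (m ω), ∏ c ∈ P, h c (restr (T c) (update i ω x)) := by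
          rw [sum_box_insert m hω, sum_comm]
      _ ≤ ∑ i ∈ box m S, √(m ω) ^ (2 - #{c ∈ P | ω ∈ T c}) *
            ∏ c ∈ P, h' c (restr ((T c).erase ω) i) :=
          sum_le_sum fun i _ => sum_range_prod_restr_update_le m P T h hh
            (hdeg ω (mem_insert_self ω S)) i
      _ ≤ √(m ω) ^ (2 - #{c ∈ P | ω ∈ T c}) *
            ((∏ a ∈ S, √(m a) ^ (2 - #{c ∈ P | a ∈ (T c).erase ω})) *
              ∏ c ∈ P, √(∑ j ∈ box m ((T c).erase ω), h' c j ^ 2)) := by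
          rw [← mul_sum]; gcongr
      _ = _ := by
          rw [prod_insert hω, mul_assoc, prod_congr rfl fun a ha => by rw [hdeg' a ha]]
          simp only [hnorm]

end Box

section Embed

variable {ι : Type} {m : ι → ℕ} {S : Finset ι}

noncomputable def extendByZero (D : PArr m S) (j : ι → ℕ) : ℝ :=
  if H : ∀ ω ∈ S, j ω < m ω then D fun ω => ⟨j ω, H ω ω.2⟩ else 0

theorem extendByZero_nonneg {D : PArr m S} (hD : ∀ i, 0 ≤ D i) (j : ι → ℕ) :
    0 ≤ extendByZero D j := by
  unfold extendByZero
  split_ifs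
  exacts [hD _, le_rfl]

variable [DecidableEq ι]

theorem pfrobNorm_abs (D : PArr m S) : pfrobNorm (fun i => |D i|) = pfrobNorm D :=
  congrArg Real.sqrt (sum_congr rfl fun i _ => sq_abs (D i))

def embed (i : PIdx m S) : ι → ℕ := fun ω => if h : ω ∈ S then i ⟨ω, h⟩ else 0

theorem extendByZero_embed (D : PArr m S) (i : PIdx m S) : extendByZero D (embed i) = D i := by
  have H : ∀ ω ∈ S, embed i ω < m ω := fun ω hω => by simp [embed, hω]
  rw [extendByZero, dif_pos H]
  congr
  ext ω
  simp [embed]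

theorem restr_embed {T : Finset ι} (hT : T ⊆ S) (i : PIdx m S) :
    restr T (embed i) = embed (prestrict hT i) := by
  ext ω
  by_cases hω : ω ∈ T
  · simp [restr, embed, prestrict, hω, hT hω]
  · simp [restr, embed, hω]

theorem sum_box_eq_sum_embed [Fintype ι] {M : Type*} [AddCommMonoid M] (G : (ι → ℕ) → M) :
    ∑ j ∈ box m S, G j = ∑ i : PIdx m S, G (embed i) := by
  symm
  refine sum_bij (fun i _ => embed i) (fun i _ => ?_) (fun i _ i' _ hii' => ?_) (fun j hj => ?_)
    (fun _ _ => rfl)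
  · rw [mem_box]
    intro ω
    by_cases hω : ω ∈ S <;> simp [embed, hω]
  · ext ω
    simpa [embed] using congrFun hii' ω
  · rw [mem_box] at hj
    refine ⟨fun ω => ⟨j ω, (hj ω).1 ω.2⟩, mem_univ _, ?_⟩
    ext ω
    by_cases hω : ω ∈ S
    · simp [embed, hω]
    · simp [embed, hω, (hj ω).2 hω]

theorem sqrt_sum_box_sq_extendByZero [Fintype ι] (D : PArr m S) :
    √(∑ j ∈ box m S, extendByZero D j ^ 2) = pfrobNorm D := by
  simp only [sum_box_eq_sum_embed, extendByZero_embed, pfrobNorm]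

end Embed

section Partition

theorem IsPartition.exists_mem {α : Type} [DecidableEq α] {S : Finset α} {P : Finset (Finset α)}
    (hP : IsPartition S P) {z : α} (hz : z ∈ S) : ∃ c ∈ P, z ∈ c := by
  rw [← hP.2.2] at hz
  simpa using hz

theorem IsPartition.eq_of_mem {α : Type} [DecidableEq α] {S : Finset α} {P : Finset (Finset α)}
    (hP : IsPartition S P) {c c' : Finset α} (hc : c ∈ P) (hc' : c' ∈ P) {z : α}
    (hzc : z ∈ c) (hzc' : z ∈ c') : c = c' := by
  by_contra hne
  simpa [hP.2.1 c hc c' hc' hne] using mem_inter.2 ⟨hzc, hzc'⟩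

variable {ι : Type} [DecidableEq ι] [Fintype ι] {Ω : Finset ι} {P : Finset (Finset (ι ⊕ ι))}

theorem filter_mem_flatten_inter_eq_pair (hP : IsPartition (oplus Ω Ω) P) {ω : ι} (hω : ω ∈ Ω)
    {a b : Finset (ι ⊕ ι)} (ha : a ∈ P) (hb : b ∈ P) (hωa : Sum.inl ω ∈ a)
    (hωb : Sum.inr ω ∈ b) : {c ∈ P | ω ∈ flatten c ∩ Ω} = {a, b} := by
  ext c
  simp only [mem_filter, flatten, mem_inter, mem_univ, true_and, hω, and_true, mem_insert,
    mem_singleton]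
  constructor
  · rintro ⟨hc, hωc | hωc⟩
    · exact Or.inl (hP.eq_of_mem hc ha hωc hωa)
    · exact Or.inr (hP.eq_of_mem hc hb hωc hωb)
  · rintro (rfl | rfl)
    exacts [⟨ha, Or.inl hωa⟩, ⟨hb, Or.inr hωb⟩]

theorem card_filter_mem_flatten_inter_le_two (hP : IsPartition (oplus Ω Ω) P) {ω : ι}
    (hω : ω ∈ Ω) : #{c ∈ P | ω ∈ flatten c ∩ Ω} ≤ 2 := by
  obtain ⟨a, ha, hωa⟩ := hP.exists_mem (inl_mem_oplus hω)
  obtain ⟨b, hb, hωb⟩ := hP.exists_mem (inr_mem_oplus hω)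
  rw [filter_mem_flatten_inter_eq_pair hP hω ha hb hωa hωb]
  exact card_le_two

theorem rpow_theta_eq_sqrt_pow (hP : IsPartition (oplus Ω Ω) P) {ω : ι} (hω : ω ∈ Ω) (x : ℝ) :
    x ^ theta P ω = √x ^ (2 - #{c ∈ P | ω ∈ flatten c ∩ Ω}) := by
  obtain ⟨a, ha, hωa⟩ := hP.exists_mem (inl_mem_oplus hω)
  obtain ⟨b, hb, hωb⟩ := hP.exists_mem (inr_mem_oplus hω)
  rw [filter_mem_flatten_inter_eq_pair hP hω ha hb hωa hωb]
  by_cases hab : a = b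
  · subst hab
    rw [theta, if_pos ⟨a, ha, hωa, hωb⟩, Real.sqrt_eq_rpow]
    simp
  · have hθ : theta P ω = 0 := by
      rw [theta, if_neg]
      rintro ⟨c, hc, hωc, hωc'⟩
      exact hab ((hP.eq_of_mem ha hc hωa hωc).trans (hP.eq_of_mem hc hb hωc' hωb))
    simp [hθ, card_pair hab]

end Partition

theorem partition_cauchy_schwarz_general {N : ℕ} (m : Fin N → ℕ) (Ω : Finset (Fin N))
    (P : Finset (Finset (Fin N ⊕ Fin N)))
    (hP : IsPartition (oplus Ω Ω) P)
    (C : ∀ c : Finset (Fin N ⊕ Fin N), PArr m (flatten c ∩ Ω)) :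
    ∑ i : PIdx m Ω, ∏ c ∈ P, C c (prestrict Finset.inter_subset_right i) ≤
      (∏ ω ∈ Ω, (m ω : ℝ) ^ theta P ω) * ∏ c ∈ P, pfrobNorm (C c) := by
  set T : Finset (Fin N ⊕ Fin N) → Finset (Fin N) := fun c => flatten c ∩ Ω
  set h : Finset (Fin N ⊕ Fin N) → (Fin N → ℕ) → ℝ := fun c => extendByZero fun i => |C c i|
  calc ∑ i : PIdx m Ω, ∏ c ∈ P, C c (prestrict inter_subset_right i)
      ≤ ∑ i : PIdx m Ω, ∏ c ∈ P, |C c (prestrict inter_subset_right i)| :=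
        sum_le_sum fun i _ => (le_abs_self _).trans (abs_prod _ _).le
    _ = ∑ j ∈ box m Ω, ∏ c ∈ P, h c (restr (T c) j) := by
        simp [h, T, sum_box_eq_sum_embed, restr_embed inter_subset_right, extendByZero_embed]
    _ ≤ (∏ ω ∈ Ω, √(m ω) ^ (2 - #{c ∈ P | ω ∈ T c})) *
          ∏ c ∈ P, √(∑ j ∈ box m (T c), h c j ^ 2) :=
        sum_box_prod_restr_le m P Ω T h (fun _ _ => inter_subset_right)
          (fun c _ => extendByZero_nonneg fun _ => abs_nonneg _)
          (fun ω hω => card_filter_mem_flatten_inter_le_two hP hω)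
    _ = (∏ ω ∈ Ω, (m ω : ℝ) ^ theta P ω) * ∏ c ∈ P, pfrobNorm (C c) := by
        congr 1
        · exact prod_congr rfl fun ω hω => (rpow_theta_eq_sqrt_pow hP hω _).symm
        · exact prod_congr rfl fun c _ => (sqrt_sum_box_sq_extendByZero _).trans (pfrobNorm_abs _)

/-- Cauchy–Schwarz-type bound for a partition `π = {℧_τ}` of `Ω ⊕ Ω`: with
`Ω_τ = (℧_τ ∪ (℧_τ − N)) ∩ Ω`, for any partial arrays `C^{(τ)} ∈ ℝ^m(Ω_τ)`,
`Σ_{i∈𝔍^m(Ω)} Π_τ C^{(τ)}_{i_{Ω_τ}} ≤ Π_{ω∈Ω} m_ω^{θ_{π,ω}} Π_τ ‖C^{(τ)}‖_F`. -/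
theorem partition_cauchy_schwarz {N : ℕ} (m : Fin N → ℕ) (Ω : Finset (Fin N))
    (hΩ : Ω.Nonempty) (κ : ℕ) (P : Finset (Finset (Fin N ⊕ Fin N)))
    (hP : IsPartition (oplus Ω Ω) P) (hPcard : P.card = κ)
    (C : ∀ c : Finset (Fin N ⊕ Fin N), PArr m (flatten c ∩ Ω)) :
    ∑ i : PIdx m Ω, ∏ c ∈ P, C c (prestrict Finset.inter_subset_right i) ≤
      (∏ ω ∈ Ω, (m ω : ℝ) ^ theta P ω) * ∏ c ∈ P, pfrobNorm (C c) :=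
  partition_cauchy_schwarz_general m Ω P hP C

end PArray
end

section
/- Let ∅ ≠ Ω ⊆ [N], π ∈ 𝔓_κ(Ω ⊕ Ω), and Θ_π = Σ_{ω∈Ω} θ_{π,ω}. Then 2Θ_π ≤ |Ω| if 1 ≤ κ ≤ |Ω|, and 2Θ_π ≤ 2|Ω| − κ if |Ω| < κ ≤ 2|Ω|. -/
open scoped BigOperators Classical

/- `2Θ_π` counts the paired `ω`, those with `ω` and `ω + N` in one cell, so `2Θ_π ≤ |Ω|`.
Delete `ω + N` from `Ω ⊕ Ω` for every paired `ω`: each cell still meets what is left, since a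
cell containing `ω + N` then also contains `ω`. The `κ` disjoint cells thus meet a set of size
`2|Ω| − 2Θ_π`, whence `κ ≤ 2|Ω| − 2Θ_π`. -/

namespace PArray

variable {ι : Type} [DecidableEq ι]

theorem IsPartition.subset_of_mem {α : Type} [DecidableEq α] {S : Finset α}
    {P : Finset (Finset α)} (hP : IsPartition S P) {c : Finset α} (hc : c ∈ P) : c ⊆ S :=
  hP.2.2 ▸ Finset.subset_biUnion_of_mem id hc

theorem IsPartition.eq_of_mem_of_mem {α : Type} [DecidableEq α] {S : Finset α}
    {P : Finset (Finset α)} (hP : IsPartition S P) {c c' : Finset α} (hc : c ∈ P) (hc' : c' ∈ P)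
    {x : α} (hx : x ∈ c) (hx' : x ∈ c') : c = c' := by
  by_contra hne
  simpa [hP.2.1 c hc c' hc' hne] using Finset.mem_inter.mpr ⟨hx, hx'⟩

theorem IsPartition.card_le_of_forall_inter_nonempty {α : Type} [DecidableEq α]
    {S T : Finset α} {P : Finset (Finset α)} (hP : IsPartition S P)
    (hT : ∀ c ∈ P, (c ∩ T).Nonempty) : P.card ≤ T.card := by
  have hdisj : (P : Set (Finset α)).PairwiseDisjoint (· ∩ T) := fun c hc c' hc' hne =>
    Finset.disjoint_iff_inter_eq_empty.mpr (Finset.subset_empty.mp fun x hx => by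
      simp only [Finset.mem_inter] at hx
      exact absurd (hP.eq_of_mem_of_mem hc hc' hx.1.1 hx.2.1) hne)
  calc P.card ≤ (P.biUnion (· ∩ T)).card := Finset.card_le_card_biUnion hdisj hT
    _ ≤ T.card := Finset.card_le_card (Finset.biUnion_subset.mpr fun _ _ =>
        Finset.inter_subset_right)

theorem card_oplus (Ω' Ω'' : Finset ι) : (oplus Ω' Ω'').card = Ω'.card + Ω''.card := by
  rw [oplus, Finset.card_union_of_disjoint, Finset.card_map, Finset.card_map]
  simp [Finset.disjoint_left]

def Paired (P : Finset (Finset (ι ⊕ ι))) (ω : ι) : Prop :=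
  ∃ c ∈ P, Sum.inl ω ∈ c ∧ Sum.inr ω ∈ c

theorem two_mul_sum_theta (P : Finset (Finset (ι ⊕ ι))) (Ω : Finset ι) :
    2 * ∑ ω ∈ Ω, theta P ω = (Ω.filter (Paired P)).card := by
  simp only [theta, Finset.sum_ite, Finset.sum_const_zero, Finset.sum_const, nsmul_eq_mul]
  ring_nf
  congr

theorem IsPartition.inter_oplus_unpaired_nonempty {Ω : Finset ι}
    {P : Finset (Finset (ι ⊕ ι))} (hP : IsPartition (oplus Ω Ω) P) {c : Finset (ι ⊕ ι)}
    (hc : c ∈ P) : (c ∩ oplus Ω (Ω.filter fun ω => ¬ Paired P ω)).Nonempty := by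
  obtain ⟨x, hx⟩ := hP.1 c hc
  have hxΩ := hP.subset_of_mem hc hx
  rcases x with ω | ω
  · exact ⟨_, Finset.mem_inter.mpr ⟨hx, inl_mem_oplus (mem_of_inl_mem_oplus hxΩ)⟩⟩
  · by_cases hω : Paired P ω
    · obtain ⟨c', hc', hinl, hinr⟩ := hω
      have hωΩ := mem_of_inr_mem_oplus hxΩ
      refine ⟨Sum.inl ω, Finset.mem_inter.mpr ⟨?_, inl_mem_oplus hωΩ⟩⟩
      rwa [hP.eq_of_mem_of_mem hc hc' hx hinr]
    · exact ⟨_, Finset.mem_inter.mpr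
        ⟨hx, inr_mem_oplus (Finset.mem_filter.mpr ⟨mem_of_inr_mem_oplus hxΩ, hω⟩)⟩⟩

theorem IsPartition.card_add_card_paired_le {Ω : Finset ι} {P : Finset (Finset (ι ⊕ ι))}
    (hP : IsPartition (oplus Ω Ω) P) : P.card + (Ω.filter (Paired P)).card ≤ 2 * Ω.card := by
  have hle := hP.card_le_of_forall_inter_nonempty fun _ hc => hP.inter_oplus_unpaired_nonempty hc
  have hsplit := Finset.card_filter_add_card_filter_not (s := Ω) (Paired P)
  rw [card_oplus] at hle
  omega

theorem theta_sum_bound_general {N : ℕ} (Ω : Finset (Fin N)) (κ : ℕ)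
    (P : Finset (Finset (Fin N ⊕ Fin N))) (hP : IsPartition (oplus Ω Ω) P)
    (hPcard : P.card = κ) :
    (1 ≤ κ → κ ≤ Ω.card → 2 * ∑ ω ∈ Ω, theta P ω ≤ (Ω.card : ℝ)) ∧
    (Ω.card < κ → κ ≤ 2 * Ω.card → 2 * ∑ ω ∈ Ω, theta P ω ≤ 2 * (Ω.card : ℝ) - κ) := by
  rw [two_mul_sum_theta]
  have hpaired : (Ω.filter (Paired P)).card ≤ Ω.card := Finset.card_filter_le _ _
  have hkey : κ + (Ω.filter (Paired P)).card ≤ 2 * Ω.card := hPcard ▸ hP.card_add_card_paired_le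
  refine ⟨fun _ _ => by exact_mod_cast hpaired, fun _ _ => ?_⟩
  rw [le_sub_iff_add_le']
  exact_mod_cast hkey

/-- Bound on the number of paired dimensions of a partition: with
`Θ_π = Σ_{ω∈Ω} θ_{π,ω}`, one has `2Θ_π ≤ |Ω|` for `1 ≤ κ ≤ |Ω|` and
`2Θ_π ≤ 2|Ω| − κ` for `|Ω| < κ ≤ 2|Ω|`. -/
theorem theta_sum_bound {N : ℕ} (Ω : Finset (Fin N)) (hΩ : Ω.Nonempty) (κ : ℕ)
    (P : Finset (Finset (Fin N ⊕ Fin N))) (hP : IsPartition (oplus Ω Ω) P)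
    (hPcard : P.card = κ) :
    (1 ≤ κ → κ ≤ Ω.card → 2 * ∑ ω ∈ Ω, theta P ω ≤ (Ω.card : ℝ)) ∧
    (Ω.card < κ → κ ≤ 2 * Ω.card → 2 * ∑ ω ∈ Ω, theta P ω ≤ 2 * (Ω.card : ℝ) - κ) :=
  theta_sum_bound_general Ω κ P hP hPcard

end PArray
end

section
/- Let d ≥ 2, k = (k₁,…,k_{d−1}), r = (r₁,…,r_{d−1}) ∈ ℕ^{d−1}, and let W₁ ∈ ℝ^{1×k₁}, W_s ∈ ℝ^{k_{s−1}×k_s} for 2 ≤ s ≤ d−1, W_d ∈ ℝ^{k_{d−1}×1}, and R_s ∈ ℝ^{k_s×r_s} for s ∈ [d−1]. Let D = Ψ_{[d−1]}(W₁,…,W_d). Then Δ(R₁,…,R_{d−1}) = Σ_{i,j∈𝔍^k} Σ_{α,β∈𝔍^r} D_{(α⊗i)⌢(β⊗j)} · Π_{s=1}^{d−1} R_s(i_s,α_s)·R_s(j_s,β_s). -/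
open scoped BigOperators Classical

namespace PArray

open Matrix

/-- The partial row-vector products
`z_s = W₁R₁R₁ᵀW₂R₂ ⋯ R_{s}` (0-indexed: `z 0 = (W 0 · R 0)ᵀ`, viewed as vectors). -/
noncomputable def zchain (K r : ℕ → ℕ)
    (W : ∀ s : ℕ, Matrix (Fin (K s)) (Fin (K (s + 1))) ℝ)
    (R : ∀ s : ℕ, Matrix (Fin (K (s + 1))) (Fin (r s)) ℝ) : ∀ s : ℕ, Fin (r s) → ℝ
  | 0 => (R 0)ᵀ.mulVec ((W 0)ᵀ.mulVec 1)
  | s + 1 => (R (s + 1))ᵀ.mulVec ((W (s + 1))ᵀ.mulVec ((R s).mulVec (zchain K r W R s)))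

/-- The quadratic form
`Δ(R₁,…,R_{d−1}) = (W₁R₁)(R₁ᵀW₂R₂)⋯(R_{d−2}ᵀW_{d−1}R_{d−1})(R_{d−1}ᵀW_d)`. -/
noncomputable def Delta (d : ℕ) (hd : 2 ≤ d) (K r : ℕ → ℕ)
    (W : ∀ s : ℕ, Matrix (Fin (K s)) (Fin (K (s + 1))) ℝ)
    (R : ∀ s : ℕ, Matrix (Fin (K (s + 1))) (Fin (r s)) ℝ) : ℝ :=
  ∑ b : Fin (K d),
    (W (d - 1))ᵀ.mulVec
      (fun y : Fin (K (d - 1)) =>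
        (R (d - 2)).mulVec (zchain K r W R (d - 2))
          (Fin.cast (congrArg K (by omega : d - 1 = d - 2 + 1)) y))
      (Fin.cast (congrArg K (by omega : d = d - 1 + 1)) b)

/-- Dimension tuple `k = (k₁,…,k_{d−1})` of the inner TT indices, `k_t = K_t`. -/
abbrev kdim (d : ℕ) (K : ℕ → ℕ) : Fin (d - 1) → ℕ := fun t => K (t.val + 1)

/-- Dimension tuple `r = (r₁,…,r_{d−1})` of the embedding ranks. -/
abbrev rdim (d : ℕ) (r : ℕ → ℕ) : Fin (d - 1) → ℕ := fun t => r t.val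

/-- Product index `α ⊗ i ∈ [a·b]` built from `α ∈ [a]` and `i ∈ [b]`. -/
def pprod {a b : ℕ} (α : Fin a) (i : Fin b) : Fin (a * b) :=
  ⟨α.val * b + i.val, by
    have hb : i.val < b := i.isLt
    calc α.val * b + i.val < (α.val + 1) * b := by nlinarith
      _ ≤ a * b := Nat.mul_le_mul_right b α.isLt⟩

/-- Product `α ⊗ i` of two partial indices. -/
def pkron {ι : Type} [DecidableEq ι] {rd kd : ι → ℕ} {Ω : Finset ι}
    (α : PIdx rd Ω) (i : PIdx kd Ω) : PIdx (fun ω => rd ω * kd ω) Ω :=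
  fun ω => pprod (α ω) (i ω)

/-- The `α`-part (quotient) of an element of `[a·b]`. -/
def pquot {a b : ℕ} (x : Fin (a * b)) : Fin a :=
  ⟨x.val / b, by
    have hb : 0 < b := by
      rcases Nat.eq_zero_or_pos b with h | h
      · exact absurd x.isLt (by simp [h])
      · exact h
    exact (Nat.div_lt_iff_lt_mul hb).mpr x.isLt⟩

/-- The `i`-part (remainder) of an element of `[a·b]`. -/
def prem {a b : ℕ} (x : Fin (a * b)) : Fin b :=
  ⟨x.val % b, by
    have hb : 0 < b := by
      rcases Nat.eq_zero_or_pos b with h | h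
      · exact absurd x.isLt (by simp [h])
      · exact h
    exact Nat.mod_lt _ hb⟩

/-- `Ψ_Ω` built from `Φ_Ω`: the entry at `(α⊗i) ⌢ (β⊗j)` equals
`Φ_Ω(…)_{i⌢j} Π_{ω∈Ω} δ_{α_ω,β_ω}`. -/
noncomputable def PsiOf {ι : Type} [DecidableEq ι] {kd : ι → ℕ} (rd : ι → ℕ) {Ω : Finset ι}
    (C : PArr (mdup kd) (oplus Ω Ω)) :
    PArr (mdup fun ω => rd ω * kd ω) (oplus Ω Ω) := fun κ =>
  C (pcat (fun ω => prem (pleft κ ω)) (fun ω => prem (pright κ ω))) *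
    ∏ ω : Ω, (if pquot (pleft κ ω) = pquot (pright κ ω) then (1 : ℝ) else 0)

/-- The array `Φ_{[d−1]}(W₁,…,W_d)`: its entry at `i ⌢ j` equals
`W₁(1,i₁) W₂(j₁,i₂) ⋯ W_d(j_{d−1},1)`. -/
noncomputable def PhiFull (d : ℕ) (K : ℕ → ℕ)
    (W : ∀ s : ℕ, Matrix (Fin (K s)) (Fin (K (s + 1))) ℝ) :
    PArr (mdup (kdim d K)) (oplus (Finset.univ : Finset (Fin (d - 1))) Finset.univ) :=
  fun κ =>
  ∑ a : Fin (K 0), ∑ b : Fin (K d), ∏ t : Fin d,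
    W t.val
      (if h : t.val = 0 then Fin.cast (congrArg K h).symm a
       else Fin.cast (congrArg K (by omega : t.val - 1 + 1 = t.val))
         (pright κ ⟨⟨t.val - 1, by omega⟩, Finset.mem_univ _⟩))
      (if h : t.val + 1 = d then Fin.cast (congrArg K h).symm b
       else pleft κ ⟨⟨t.val, by omega⟩, Finset.mem_univ _⟩)

end PArray

/-!
Both sides are sums over the same paths `a → i₁ → j₁ → i₂ → ⋯ → j_{d−1} → b`. The Kronecker
deltas in `Ψ` identify `α` with `β`, so the `α`-sum turns the `R`-factors into the Gram matrices
`R_s R_sᵀ`. On the other side `Δ` is the sum of all entries of the matrix product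
`W₁ (R₁R₁ᵀ) W₂ ⋯ (R_{d−1}R_{d−1}ᵀ) W_d`, and expanding this product entrywise gives exactly
`Σ_{i,j} Φ_{i⌢j} Π_s (R_sR_sᵀ)(i_s, j_s)`.
-/

namespace PArray

open Matrix Finset

theorem prem_pprod {a b : ℕ} (α : Fin a) (i : Fin b) : prem (pprod α i) = i := by
  ext
  simp [prem, pprod, Nat.mod_eq_of_lt i.isLt]

theorem pquot_pprod {a b : ℕ} (α : Fin a) (i : Fin b) : pquot (pprod α i) = α := by
  ext
  simp only [pquot, pprod]
  rw [Nat.add_comm, Nat.add_mul_div_right _ _ i.pos, Nat.div_eq_of_lt i.isLt, Nat.zero_add]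

theorem PsiOf_pcat_pkron {ι : Type} [DecidableEq ι] {kd rd : ι → ℕ} {Ω : Finset ι}
    (C : PArr (mdup kd) (oplus Ω Ω)) (α β : PIdx rd Ω) (i j : PIdx kd Ω) :
    PsiOf rd C (pcat (pkron α i) (pkron β j)) = C (pcat i j) * if α = β then 1 else 0 := by
  simp only [PsiOf, pleft, pright, pcat, pkron, prem_pprod, pquot_pprod, Fintype.prod_boole,
    funext_iff]

def piEquivPIdxUniv {ι : Type} [Fintype ι] (m : ι → ℕ) : (∀ t, Fin (m t)) ≃ PIdx m univ where
  toFun f ω := f ω.val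
  invFun g t := g ⟨t, mem_univ t⟩
  left_inv _ := rfl
  right_inv _ := rfl

theorem sum_PIdx_prod_eq_prod_sum {ι : Type} [Fintype ι] [DecidableEq ι] {m : ι → ℕ}
    (f : ∀ t, Fin (m t) → ℝ) :
    ∑ α : PIdx m univ, ∏ t, f t (α ⟨t, mem_univ t⟩) = ∏ t, ∑ c, f t c := by
  rw [Fintype.prod_sum]
  exact Fintype.sum_equiv (piEquivPIdxUniv m).symm _ _ fun _ => rfl

theorem sum_PsiOf_mul_prod {ι : Type} [Fintype ι] [DecidableEq ι] {kd rd : ι → ℕ}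
    (C : PArr (mdup kd) (oplus univ univ)) (R : ∀ t, Matrix (Fin (kd t)) (Fin (rd t)) ℝ)
    (i j : PIdx kd univ) :
    ∑ α : PIdx rd univ, ∑ β : PIdx rd univ, PsiOf rd C (pcat (pkron α i) (pkron β j)) *
        ∏ t, R t (i ⟨t, mem_univ t⟩) (α ⟨t, mem_univ t⟩) *
          R t (j ⟨t, mem_univ t⟩) (β ⟨t, mem_univ t⟩) =
      C (pcat i j) * ∏ t, (R t * (R t)ᵀ) (i ⟨t, mem_univ t⟩) (j ⟨t, mem_univ t⟩) := by
  simp only [PsiOf_pcat_pkron, mul_assoc, ite_mul, one_mul, zero_mul, mul_ite, mul_zero,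
    sum_ite_eq, mem_univ, if_true, ← mul_sum, mul_apply, transpose_apply]
  exact congrArg _
    (sum_PIdx_prod_eq_prod_sum fun t c => R t (i ⟨t, mem_univ t⟩) c * R t (j ⟨t, mem_univ t⟩) c)

theorem sum_pi_snoc {M : Type*} [AddCommMonoid M] {n : ℕ} {α : Fin (n + 1) → Type*}
    [∀ t, Fintype (α t)] (f : (∀ t, α t) → M) :
    ∑ F, f F = ∑ x : α (Fin.last n), ∑ F : ∀ t : Fin n, α t.castSucc, f (Fin.snoc F x) := by
  rw [← (Fin.snocEquiv α).sum_comp f, Fintype.sum_prod_type]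
  rfl

theorem cons_snoc_castSucc {n : ℕ} {α : Fin (n + 2) → Sort*} (a : α 0)
    (j : ∀ t : Fin n, α t.castSucc.succ) (y : α (Fin.last n).succ) (t : Fin (n + 1)) :
    Fin.cons (α := α) a (Fin.snoc (α := fun t => α t.succ) j y) t.castSucc =
      Fin.cons (α := fun t => α t.castSucc) a j t := by
  cases t using Fin.cases with
  | zero => rfl
  | succ s => exact Fin.snoc_castSucc (α := fun t => α t.succ) y j s

section Chain

variable {K r : ℕ → ℕ} (W : ∀ s : ℕ, Matrix (Fin (K s)) (Fin (K (s + 1))) ℝ)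
  (R : ∀ s : ℕ, Matrix (Fin (K (s + 1))) (Fin (r s)) ℝ)

noncomputable def chainMatrix : ∀ n : ℕ, Matrix (Fin (K 0)) (Fin (K (n + 1))) ℝ
  | 0 => W 0
  | n + 1 => chainMatrix n * (R n * (R n)ᵀ) * W (n + 1)

theorem zchain_eq_vecMul_chainMatrix (s : ℕ) :
    zchain K r W R s = (1 : Fin (K 0) → ℝ) ᵥ* (chainMatrix W R s * R s) := by
  induction s with
  | zero => simp only [zchain, chainMatrix, mulVec_transpose, vecMul_vecMul]
  | succ s ih =>
    simp only [zchain, chainMatrix, ih, ← vecMul_transpose, vecMul_vecMul, transpose_transpose,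
      Matrix.mul_assoc]

theorem Delta_eq_sum_chainMatrix (n : ℕ) (hd : 2 ≤ n + 2) :
    Delta (n + 2) hd K r W R = ∑ a, ∑ b, chainMatrix W R (n + 1) a b := by
  change ∑ b, ((W (n + 1))ᵀ *ᵥ (R n *ᵥ zchain K r W R n)) b = _
  rw [zchain_eq_vecMul_chainMatrix, mulVec_transpose, ← vecMul_transpose, vecMul_vecMul,
    vecMul_vecMul]
  simp only [chainMatrix, Matrix.mul_assoc, vecMul, dotProduct, Pi.one_apply, one_mul]
  exact sum_comm

/-- `W₀(a, i₀) W₁(j₀, i₁) ⋯ W_n(j_{n−1}, b)`, the summand of `Φ` with its end indices fixed. -/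
noncomputable def pathProd (n : ℕ) (a : Fin (K 0)) (b : Fin (K (n + 1)))
    (i j : ∀ t : Fin n, Fin (K (t.val + 1))) : ℝ :=
  ∏ t : Fin (n + 1), W t.val (Fin.cons (α := fun t => Fin (K t.val)) a j t)
    (Fin.snoc (α := fun t => Fin (K (t.val + 1))) i b t)

theorem pathProd_snoc (n : ℕ) (a : Fin (K 0)) (b : Fin (K (n + 2)))
    (i j : ∀ t : Fin n, Fin (K (t.val + 1))) (x y : Fin (K (n + 1))) :
    pathProd W (n + 1) a b (Fin.snoc (α := fun t => Fin (K (t.val + 1))) i x)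
        (Fin.snoc (α := fun t => Fin (K (t.val + 1))) j y) =
      pathProd W n a x i j * W (n + 1) y b := by
  unfold pathProd
  rw [Fin.prod_univ_castSucc]
  congr 1
  · exact prod_congr rfl fun t _ => congrArg₂ (W t)
      (cons_snoc_castSucc (α := fun t => Fin (K t.val)) a j y t) (Fin.snoc_castSucc _ _ _)
  · rw [Fin.snoc_last]
    exact congrArg (W (n + 1) · b)
      ((Fin.cons_succ (α := fun t => Fin (K t.val)) a _ (Fin.last n)).trans
        (Fin.snoc_last (α := fun t : Fin (n + 1) => Fin (K (t.val + 1))) _ _))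

theorem chainMatrix_apply (n : ℕ) (a : Fin (K 0)) (b : Fin (K (n + 1))) :
    chainMatrix W R n a b =
      ∑ i : ∀ t : Fin n, Fin (K (t.val + 1)), ∑ j : ∀ t : Fin n, Fin (K (t.val + 1)),
        pathProd W n a b i j * ∏ t : Fin n, (R t.val * (R t.val)ᵀ) (i t) (j t) := by
  induction n with
  | zero =>
    simp only [chainMatrix, pathProd, Fintype.sum_unique, Fin.prod_univ_succ, Fin.prod_univ_zero,
      mul_one, Fin.cons_zero]
    rfl
  | succ n ih =>
    simp only [chainMatrix, mul_apply, ih, sum_mul, sum_pi_snoc (M := ℝ) (n := n)]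
    rw [sum_comm]
    refine sum_congr rfl fun x _ => ?_
    rw [sum_comm]
    refine sum_congr rfl fun i _ => sum_congr rfl fun y _ => sum_congr rfl fun j _ => ?_
    rw [pathProd_snoc, Fin.prod_univ_castSucc]
    simp only [Fin.snoc_castSucc, Fin.snoc_last, Fin.val_castSucc, Fin.val_last]
    ring

theorem PhiFull_pcat (n : ℕ) (i j : ∀ t : Fin n, Fin (K (t.val + 1))) :
    PhiFull (n + 1) K W (pcat (piEquivPIdxUniv _ i) (piEquivPIdxUniv _ j)) =
      ∑ a, ∑ b, pathProd W n a b i j := by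
  refine sum_congr rfl fun a _ => sum_congr rfl fun b _ => prod_congr rfl fun t _ => ?_
  congr 1
  · cases t using Fin.cases with
    | zero => rfl
    | succ s => exact dif_neg (Nat.succ_ne_zero _)
  · cases t using Fin.lastCases with
    | last =>
      exact (dif_pos rfl).trans (Fin.snoc_last (α := fun t => Fin (K (t.val + 1))) _ _).symm
    | cast s =>
      rw [dif_neg (by simp [s.isLt.ne])]
      exact (Fin.snoc_castSucc (α := fun t => Fin (K (t.val + 1))) b i s).symm

end Chain

theorem delta_eq_quadratic_form_general (d : ℕ) (hd : 2 ≤ d) (K r : ℕ → ℕ)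
    (W : ∀ s : ℕ, Matrix (Fin (K s)) (Fin (K (s + 1))) ℝ)
    (R : ∀ s : ℕ, Matrix (Fin (K (s + 1))) (Fin (r s)) ℝ) :
    Delta d hd K r W R =
      ∑ i : PIdx (kdim d K) Finset.univ, ∑ j : PIdx (kdim d K) Finset.univ,
      ∑ α : PIdx (rdim d r) Finset.univ, ∑ β : PIdx (rdim d r) Finset.univ,
        PsiOf (rdim d r) (PhiFull d K W) (pcat (pkron α i) (pkron β j)) *
          ∏ t : Fin (d - 1),
            R t.val (i ⟨t, Finset.mem_univ t⟩) (α ⟨t, Finset.mem_univ t⟩) *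
              R t.val (j ⟨t, Finset.mem_univ t⟩) (β ⟨t, Finset.mem_univ t⟩) := by
  obtain ⟨n, rfl⟩ : ∃ n, d = n + 2 := ⟨d - 2, by omega⟩
  calc Delta (n + 2) hd K r W R
      = ∑ i : ∀ t : Fin (n + 1), Fin (K (t.val + 1)), ∑ j : ∀ t : Fin (n + 1), Fin (K (t.val + 1)),
          PhiFull (n + 2) K W (pcat (piEquivPIdxUniv _ i) (piEquivPIdxUniv _ j)) *
            ∏ t : Fin (n + 1), (R t * (R t)ᵀ) (i t) (j t) := by
        simp only [Delta_eq_sum_chainMatrix, chainMatrix_apply, PhiFull_pcat, sum_mul]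
        exact (sum_congr rfl fun _ _ => sum_comm.trans (sum_congr rfl fun _ _ => sum_comm)).trans
          (sum_comm.trans (sum_congr rfl fun _ _ => sum_comm))
    _ = ∑ i : PIdx (kdim (n + 2) K) univ, ∑ j : PIdx (kdim (n + 2) K) univ,
          PhiFull (n + 2) K W (pcat i j) *
            ∏ t : Fin (n + 1), (R t * (R t)ᵀ) (i ⟨t, mem_univ t⟩) (j ⟨t, mem_univ t⟩) := by
        simp only [← (piEquivPIdxUniv _).sum_comp]
        rfl
    _ = _ := sum_congr rfl fun i _ => sum_congr rfl fun j _ =>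
        (sum_PsiOf_mul_prod _ (fun t : Fin (n + 1) => R t.val) i j).symm

/-- The quadratic form `Δ(R₁,…,R_{d−1})` expands as
`Σ_{i,j∈𝔍^k} Σ_{α,β∈𝔍^r} D_{(α⊗i)⌢(β⊗j)} Π_s R_s(i_s,α_s) R_s(j_s,β_s)` where
`D = Ψ_{[d−1]}(W₁,…,W_d)`. -/
theorem delta_eq_quadratic_form (d : ℕ) (hd : 2 ≤ d) (K r : ℕ → ℕ)
    (hK0 : K 0 = 1) (hKd : K d = 1)
    (W : ∀ s : ℕ, Matrix (Fin (K s)) (Fin (K (s + 1))) ℝ)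
    (R : ∀ s : ℕ, Matrix (Fin (K (s + 1))) (Fin (r s)) ℝ) :
    Delta d hd K r W R =
      ∑ i : PIdx (kdim d K) Finset.univ, ∑ j : PIdx (kdim d K) Finset.univ,
      ∑ α : PIdx (rdim d r) Finset.univ, ∑ β : PIdx (rdim d r) Finset.univ,
        PsiOf (rdim d r) (PhiFull d K W) (pcat (pkron α i) (pkron β j)) *
          ∏ t : Fin (d - 1),
            R t.val (i ⟨t, Finset.mem_univ t⟩) (α ⟨t, Finset.mem_univ t⟩) *
              R t.val (j ⟨t, Finset.mem_univ t⟩) (β ⟨t, Finset.mem_univ t⟩) :=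
  delta_eq_quadratic_form_general d hd K r W R

end PArray
end

section
/- Let d ≥ 2, k = (k₁,…,k_{d−1}), r = (r₁,…,r_{d−1}) ∈ ℕ^{d−1}, W₁ ∈ ℝ^{1×k₁}, W_s ∈ ℝ^{k_{s−1}×k_s} for 2 ≤ s ≤ d−1, W_d ∈ ℝ^{k_{d−1}×1}. Let C = Φ_{[d−1]}(W₁,…,W_d) and D = Ψ_{[d−1]}(W₁,…,W_d). Then for every s ∈ [d−1]: C^⟨{s}⟩ = Φ_{[d−1]∖{s}}(W₁,…,W_{s−1}, W_s·W_{s+1}, W_{s+2},…,W_d) and D^⟨{s}⟩ = r_s · Ψ_{[d−1]∖{s}}(W₁,…,W_{s−1}, W_s·W_{s+1}, W_{s+2},…,W_d). -/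
open scoped BigOperators Classical

namespace PArray

/-- The array `Φ_{[d−1]∖{s}}(W₁,…,W_{s−1}, W_s·W_{s+1}, W_{s+2},…,W_d)`: its entry at `i ⌢ j`
is the chain `W₁(1,i₁)⋯[W_s W_{s+1}](j_{s−1}, i_{s+1})⋯W_d(j_{d−1},1)`, written with the
matrix product `W_s·W_{s+1}` expanded as a sum over `c`. -/
noncomputable def PhiDel (d : ℕ) (K : ℕ → ℕ)
    (W : ∀ s : ℕ, Matrix (Fin (K s)) (Fin (K (s + 1))) ℝ) (s₀ : Fin (d - 1)) :
    PArr (mdup (kdim d K)) (oplus (Finset.univ \ {s₀}) (Finset.univ \ {s₀})) := fun κ =>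
  ∑ a : Fin (K 0), ∑ b : Fin (K d), ∑ c : Fin (K (s₀.val + 1)), ∏ t : Fin d,
    W t.val
      (if h1 : t.val = s₀.val + 1 then Fin.cast (congrArg K h1).symm c
       else if h : t.val = 0 then Fin.cast (congrArg K h).symm a
       else Fin.cast (congrArg K (by omega : t.val - 1 + 1 = t.val))
         (pright κ ⟨⟨t.val - 1, by omega⟩,
            Finset.mem_sdiff.mpr ⟨Finset.mem_univ _, by
              simp only [Finset.mem_singleton]
              intro hc
              have hv : t.val - 1 = s₀.val := congrArg Fin.val hc
              omega⟩⟩))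
      (if h2 : t.val = s₀.val then
         Fin.cast (congrArg K (by omega : s₀.val + 1 = t.val + 1)) c
       else if h : t.val + 1 = d then Fin.cast (congrArg K h).symm b
       else pleft κ ⟨⟨t.val, by omega⟩,
         Finset.mem_sdiff.mpr ⟨Finset.mem_univ _, by
           simp only [Finset.mem_singleton]
           intro hc
           have hv : t.val = s₀.val := congrArg Fin.val hc
           omega⟩⟩)

/-! Tracing out a set `Ω'` of positions of `Ψ`, the Kronecker factors `δ_{α_ω,β_ω}` at the traced
positions are identically `1`, those at the other positions do not depend on the summation index,
and the `Φ`-factor depends on the traced index `α ⊗ ℓ` only through `ℓ`; so every traced position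
contributes a factor `r_ω`, and `D^⟨Ω'⟩ = (∏_{ω ∈ Ω'} r_ω) · Ψ(C^⟨Ω'⟩)`. For `Φ` itself, tracing
out `s` identifies the column index of `W_s` with the row index of `W_{s+1}`, and the sum over it
is the matrix product `W_s W_{s+1}`. -/

section PartialTrace

variable {ι : Type} [DecidableEq ι] {m : ι → ℕ} {Ω Ω' : Finset ι}

/-- The index `(i ⊔ ℓ) ⌢ (j ⊔ ℓ)` of the partial trace at `κ = i ⌢ j`. -/
def ptraceIdx (h : Ω' ⊆ Ω) (κ : PIdx (mdup m) (oplus (Ω \ Ω') (Ω \ Ω'))) (ℓ : PIdx m Ω') :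
    PIdx (mdup m) (oplus Ω Ω) :=
  pcast (by rw [Finset.sdiff_union_of_subset h]) (pcat (pjoin (pleft κ) ℓ) (pjoin (pright κ) ℓ))

theorem ptrace_apply (h : Ω' ⊆ Ω) (C : PArr (mdup m) (oplus Ω Ω))
    (κ : PIdx (mdup m) (oplus (Ω \ Ω') (Ω \ Ω'))) :
    ptrace h C κ = ∑ ℓ, C (ptraceIdx h κ ℓ) :=
  rfl

theorem pleft_ptraceIdx (h : Ω' ⊆ Ω) (κ : PIdx (mdup m) (oplus (Ω \ Ω') (Ω \ Ω')))
    (ℓ : PIdx m Ω') (ω : Ω) :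
    pleft (ptraceIdx h κ ℓ) ω =
      if hω : ω.1 ∈ Ω \ Ω' then pleft κ ⟨ω, hω⟩
      else ℓ ⟨ω, by simpa [ω.2] using hω⟩ :=
  rfl

theorem pright_ptraceIdx (h : Ω' ⊆ Ω) (κ : PIdx (mdup m) (oplus (Ω \ Ω') (Ω \ Ω')))
    (ℓ : PIdx m Ω') (ω : Ω) :
    pright (ptraceIdx h κ ℓ) ω =
      if hω : ω.1 ∈ Ω \ Ω' then pright κ ⟨ω, hω⟩
      else ℓ ⟨ω, by simpa [ω.2] using hω⟩ :=
  rfl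

end PartialTrace

theorem sum_pi_prem {α M : Type} [Fintype α] [DecidableEq α] [AddCommMonoid M] (a b : α → ℕ)
    (F : (∀ x, Fin (b x)) → M) :
    ∑ ℓ : ∀ x, Fin (a x * b x), F (fun x => prem (ℓ x)) = (∏ x, a x) • ∑ ℓ, F ℓ := by
  let e : (∀ x, Fin (a x * b x)) ≃ (∀ x, Fin (a x)) × (∀ x, Fin (b x)) :=
    (Equiv.piCongrRight fun x => finProdFinEquiv.symm).trans
      (Equiv.arrowProdEquivProdArrow _ _ _)
  have hprem : ∀ p, (fun x => prem (e.symm p x)) = p.2 := fun p => funext fun x =>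
    congrArg Prod.snd (finProdFinEquiv.symm_apply_apply (p.1 x, p.2 x))
  rw [← e.symm.sum_comp]
  simp only [hprem, Fintype.sum_prod_type, Finset.sum_const, Finset.card_univ, Fintype.card_pi,
    Fintype.card_fin]

section Psi

variable {ι : Type} [DecidableEq ι] {kd rd : ι → ℕ}

/-- The `k`-part `i ⌢ j` of an index `(α ⊗ i) ⌢ (β ⊗ j)`. -/
def premCat {S : Finset ι} (κ : PIdx (mdup fun ω => rd ω * kd ω) (oplus S S)) :
    PIdx (mdup kd) (oplus S S) :=
  pcat (fun ω => prem (pleft κ ω)) (fun ω => prem (pright κ ω))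

/-- The `r`-parts `α` and `β` of an index `(α ⊗ i) ⌢ (β ⊗ j)` agree. -/
def QuotDiag {S : Finset ι} (κ : PIdx (mdup fun ω => rd ω * kd ω) (oplus S S)) : Prop :=
  ∀ ω : S, pquot (pleft κ ω) = pquot (pright κ ω)

theorem psiOf_apply {S : Finset ι} (C : PArr (mdup kd) (oplus S S))
    (κ : PIdx (mdup fun ω => rd ω * kd ω) (oplus S S)) :
    PsiOf rd C κ = if QuotDiag κ then C (premCat κ) else 0 := by
  rw [PsiOf, Fintype.prod_boole, mul_ite, mul_one, mul_zero]
  exact if_congr Iff.rfl rfl rfl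

variable {Ω Ω' : Finset ι} (h : Ω' ⊆ Ω)
  (κ : PIdx (mdup fun ω => rd ω * kd ω) (oplus (Ω \ Ω') (Ω \ Ω')))

theorem premCat_ptraceIdx (ℓ : PIdx (fun ω => rd ω * kd ω) Ω') :
    premCat (ptraceIdx h κ ℓ) = ptraceIdx h (premCat κ) (fun ω => prem (ℓ ω)) := by
  funext ζ
  obtain ⟨ζ | ζ, hζ⟩ := ζ <;>
  · simp only [premCat, ptraceIdx, pcat, pcast, pleft, pright, pjoin]
    exact apply_dite _ _ _ _

theorem quotDiag_ptraceIdx_iff (ℓ : PIdx (fun ω => rd ω * kd ω) Ω') :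
    QuotDiag (ptraceIdx h κ ℓ) ↔ QuotDiag κ := by
  constructor
  · intro hdiag ω
    have := hdiag ⟨ω, (Finset.mem_sdiff.mp ω.2).1⟩
    rwa [pleft_ptraceIdx, pright_ptraceIdx, dif_pos ω.2, dif_pos ω.2] at this
  · intro hdiag ω
    rw [pleft_ptraceIdx, pright_ptraceIdx]
    split_ifs with hω
    · exact hdiag ⟨ω, hω⟩
    · rfl

theorem ptrace_psiOf (C : PArr (mdup kd) (oplus Ω Ω)) :
    ptrace h (PsiOf rd C) κ = (∏ ω ∈ Ω', (rd ω : ℝ)) * PsiOf rd (ptrace h C) κ := by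
  simp only [ptrace_apply, psiOf_apply, quotDiag_ptraceIdx_iff, premCat_ptraceIdx]
  split_ifs
  · rw [sum_pi_prem (fun ω : Ω' => rd ω) (fun ω : Ω' => kd ω)
      (fun ℓ => C (ptraceIdx h (premCat κ) ℓ)), nsmul_eq_mul, Nat.cast_prod,
      Finset.prod_coe_sort Ω' fun ω => (rd ω : ℝ)]
  · simp

end Psi

section Phi

variable {ι : Type} [DecidableEq ι]

def pidxSingletonEquiv (m : ι → ℕ) (a : ι) : PIdx m ({a} : Finset ι) ≃ Fin (m a) where
  toFun ℓ := ℓ ⟨a, Finset.mem_singleton_self a⟩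
  invFun c ω := Fin.cast (congrArg m (Finset.mem_singleton.mp ω.2).symm) c
  left_inv ℓ := by
    funext ⟨v, hv⟩
    obtain rfl := Finset.mem_singleton.mp hv
    rfl
  right_inv _ := rfl

theorem ptrace_phiFull (d : ℕ) (K : ℕ → ℕ) (W : ∀ s : ℕ, Matrix (Fin (K s)) (Fin (K (s + 1))) ℝ)
    (s₀ : Fin (d - 1)) :
    ptrace (Finset.subset_univ {s₀}) (PhiFull d K W) = PhiDel d K W s₀ := by
  funext κ
  rw [ptrace_apply, ← (pidxSingletonEquiv (kdim d K) s₀).symm.sum_comp]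
  simp only [PhiFull, PhiDel]
  rw [Finset.sum_comm]
  refine Finset.sum_congr rfl fun a _ => ?_
  rw [Finset.sum_comm]
  refine Finset.sum_congr rfl fun b _ => Finset.sum_congr rfl fun c _ =>
    Finset.prod_congr rfl fun t _ => ?_
  -- factorwise: the traced index `ℓ_{s₀}` sits exactly where `PhiDel` puts `c`
  congr 1 <;> simp only [pleft_ptraceIdx, pright_ptraceIdx] <;> split_ifs <;> first
    | rfl
    | (ext; simp [pidxSingletonEquiv]; done)
    | (exfalso; simp only [Finset.mem_sdiff, Finset.mem_univ, true_and, Finset.mem_singleton,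
        Fin.ext_iff] at *; omega)

end Phi

theorem trace_singleton_phi_psi_general (d : ℕ) (K r : ℕ → ℕ)
    (W : ∀ s : ℕ, Matrix (Fin (K s)) (Fin (K (s + 1))) ℝ) (s₀ : Fin (d - 1)) :
    (ptrace (Finset.subset_univ {s₀}) (PhiFull d K W) = PhiDel d K W s₀) ∧
    (ptrace (Finset.subset_univ {s₀}) (PsiOf (rdim d r) (PhiFull d K W)) =
      fun κ => (r s₀.val : ℝ) * PsiOf (rdim d r) (PhiDel d K W s₀) κ) := by
  refine ⟨ptrace_phiFull d K W s₀, funext fun κ => ?_⟩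
  rw [ptrace_psiOf, ptrace_phiFull, Finset.prod_singleton]

/-- Partial traces of `Φ` and `Ψ` along a singleton `{s}` contract the chain:
`C^⟨{s}⟩ = Φ_{[d−1]∖{s}}(W₁,…,W_s W_{s+1},…,W_d)` and
`D^⟨{s}⟩ = r_s · Ψ_{[d−1]∖{s}}(W₁,…,W_s W_{s+1},…,W_d)`. -/
theorem trace_singleton_phi_psi (d : ℕ) (hd : 2 ≤ d) (K r : ℕ → ℕ)
    (hK0 : K 0 = 1) (hKd : K d = 1)
    (W : ∀ s : ℕ, Matrix (Fin (K s)) (Fin (K (s + 1))) ℝ) (s₀ : Fin (d - 1)) :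
    (ptrace (Finset.subset_univ {s₀}) (PhiFull d K W) = PhiDel d K W s₀) ∧
    (ptrace (Finset.subset_univ {s₀}) (PsiOf (rdim d r) (PhiFull d K W)) =
      fun κ => (r s₀.val : ℝ) * PsiOf (rdim d r) (PhiDel d K W s₀) κ) :=
  trace_singleton_phi_psi_general d K r W s₀

end PArray
end

section
/- Let A ∈ ℝ^{n₁×⋯×n_d} have ttrank(A) = (r₁,…,r_{d−1}) and consider minimal TT factorizations of A: a left-orthogonal one {U_s}_{s=1}^d, a right-orthogonal one {V_s}_{s=1}^d, and a t-orthogonal one {T_s}_{s=1}^d for some t ∈ [d]. Then there exist orthogonal matrices {Q_s}_{s=1}^{d−1}, Q_s ∈ ℝ^{r_s×r_s}, with Q₀ = Q_d = 1, such that T_s^< = (I_{n_s} ⊗ Q_{s−1}ᵀ) U_s^< Q_s for s = 1,…,t−1 and T_s^> = Q_{s−1}ᵀ V_s^> (I_{n_s} ⊗ Q_s) for s = t+1,…,d, and one of the following holds: if t = d then T_t^< = (I_{n_t} ⊗ Q_{t−1}ᵀ) U_t^<; if t = 1 then T_t^> = V_t^> (I_{n_t} ⊗ Q_t); if 1 <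 t < d then col(T_t^<) = col((I_{n_t} ⊗ Q_{t−1}ᵀ) U_t^<) and row(T_t^>) = row(V_t^> (I_{n_t} ⊗ Q_t)). -/
open scoped BigOperators
open Matrix

namespace TT

/-- Left unfolding `G^< ∈ ℝ^{np×q}` of a third-order tensor `G ∈ ℝ^{p×n×q}`
(the row index `(i,a)` corresponds to the paper's `a + (i−1)p`). -/
def leftUnf {p n q : ℕ} (G : Fin p → Fin n → Fin q → ℝ) :
    Matrix (Fin n × Fin p) (Fin q) ℝ := fun x c => G x.2 x.1 c

/-- Right unfolding `G^> ∈ ℝ^{p×nq}` of a third-order tensor `G ∈ ℝ^{p×n×q}`. -/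
def rightUnf {p n q : ℕ} (G : Fin p → Fin n → Fin q → ℝ) :
    Matrix (Fin p) (Fin n × Fin q) ℝ := fun a x => G a x.1 x.2

/-- A third-order tensor is left-orthogonal if its left unfolding has orthonormal columns. -/
def LeftOrth {p n q : ℕ} (G : Fin p → Fin n → Fin q → ℝ) : Prop :=
  (leftUnf G)ᵀ * leftUnf G = 1

/-- A third-order tensor is right-orthogonal if its right unfolding has orthonormal rows. -/
def RightOrth {p n q : ℕ} (G : Fin p → Fin n → Fin q → ℝ) : Prop :=
  rightUnf G * (rightUnf G)ᵀ = 1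

/-- A TT factorization is minimal if the left and right unfoldings of all cores are
full-rank. -/
def MinimalTT {d : ℕ} {n : Fin d → ℕ} {ρ : Fin (d + 1) → ℕ}
    (G : ∀ s : Fin d, Fin (ρ s.castSucc) → Fin (n s) → Fin (ρ s.succ) → ℝ) : Prop :=
  ∀ s : Fin d, (leftUnf (G s)).rank = ρ s.succ ∧ (rightUnf (G s)).rank = ρ s.castSucc

/-- A TT factorization is `t`-orthogonal (`t ∈ [d]`, 1-based) if the cores `1,…,t−1` are
left-orthogonal and the cores `t+1,…,d` are right-orthogonal. -/
def TOrth {d : ℕ} {n : Fin d → ℕ} {ρ : Fin (d + 1) → ℕ} (t : ℕ)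
    (G : ∀ s : Fin d, Fin (ρ s.castSucc) → Fin (n s) → Fin (ρ s.succ) → ℝ) : Prop :=
  (∀ s : Fin d, s.val + 1 < t → LeftOrth (G s)) ∧
  (∀ s : Fin d, t < s.val + 1 → RightOrth (G s))

/-- Column space of a matrix. -/
def colSpace {γ δ : Type} [Fintype δ] [DecidableEq δ] (M : Matrix γ δ ℝ) :
    Submodule ℝ (γ → ℝ) := LinearMap.range M.mulVecLin

/-- Row space of a matrix. -/
def rowSpace {γ δ : Type} [Fintype γ] [DecidableEq γ] (M : Matrix γ δ ℝ) :
    Submodule ℝ (δ → ℝ) := colSpace Mᵀ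

/-- The `p`-block coherence `μ_{u,p}(M)` of a subspace `M ⊆ ℝ^{np}` with respect to a matrix
norm `‖·‖_u`, defined through any matrix `Q` whose columns form an orthonormal basis of `M`
(the value is independent of the choice of `Q` for a unitarily invariant norm). -/
noncomputable def blockCoh (ν : ∀ p q : ℕ, Matrix (Fin p) (Fin q) ℝ → ℝ) (p n : ℕ)
    (M : Submodule ℝ ((Fin n × Fin p) → ℝ)) : ℝ :=
  sSup { y | ∃ (q : ℕ) (Q : Matrix (Fin n × Fin p) (Fin q) ℝ),
    Qᵀ * Q = 1 ∧ colSpace Q = M ∧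
    y = ((n * p : ℝ) / q) * ⨆ i : Fin n, (ν q p (fun α j => Q (i, j) α)) ^ 2 }

/-- Left coherence `μ_{u,<}(G) = μ_{u,p}(col(G^<))` of a third-order tensor `G ∈ ℝ^{p×n×q}`. -/
noncomputable def muLeft (ν : ∀ p q : ℕ, Matrix (Fin p) (Fin q) ℝ → ℝ)
    {p n q : ℕ} (G : Fin p → Fin n → Fin q → ℝ) : ℝ :=
  blockCoh ν p n (colSpace (leftUnf G))

/-- Right coherence `μ_{u,>}(G) = μ_{u,q}(row(G^>))` of a third-order tensor `G ∈ ℝ^{p×n×q}`. -/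
noncomputable def muRight (ν : ∀ p q : ℕ, Matrix (Fin p) (Fin q) ℝ → ℝ)
    {p n q : ℕ} (G : Fin p → Fin n → Fin q → ℝ) : ℝ :=
  blockCoh ν q n (rowSpace (rightUnf G))

end TT

/-! The left and right interface matrices `L_s = G_{≤s}` and `R_s = G_{>s}` of a TT
factorization of `A` multiply to the `s`-th unfolding of `A`, and minimality makes `L_s` of full
column rank and `R_s` of full row rank. Hence two minimal factorizations `T` and `U` are related by
invertible gauge matrices, `L_s(T) = L_s(U) Q_s`, and comparing the recursions
`L_s = (I ⊗ L_{s-1}) G_s^<` of both factorizations gives `Q_{s-1} T_s(:,i,:) = U_s(:,i,:) Q_s` for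
every slice. While the cores of `T` and `U` are left-orthogonal, this relation carries
`Q_{s-1}ᵀ Q_{s-1} = I` over to `Q_s`, starting from `Q_0 = 1`. Symmetrically, the right interfaces
give a gauge between `T` and `V` that is orthogonal from `Q_d = 1` down to `Q_t`; the theorem uses
the first gauge below `t` and the transpose of the second one from `t` on. -/

namespace Matrix

variable {K : Type*} [Field K] {l m n o : Type*}

theorem mulVec_injective_of_rank_eq [Fintype n] {M : Matrix m n K}
    (h : M.rank = Fintype.card n) : Function.Injective M.mulVec := by
  rw [mulVec_injective_iff, linearIndependent_iff_card_eq_finrank_span, Set.finrank,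
    ← rank_eq_finrank_span_cols, h]

theorem vecMul_injective_of_rank_eq [Fintype m] [Fintype n] {M : Matrix m n K}
    (h : M.rank = Fintype.card m) : Function.Injective M.vecMul := by
  rw [vecMul_injective_iff, linearIndependent_iff_card_eq_finrank_span, Set.finrank,
    ← rank_eq_finrank_span_row, h]

theorem exists_mul_eq_one_of_mulVec_injective [Fintype m] [Fintype n] [DecidableEq n]
    {M : Matrix m n K} (h : Function.Injective M.mulVec) : ∃ B : Matrix n m K, B * M = 1 := by
  classical
  obtain ⟨g, hg⟩ := M.mulVecLin.exists_leftInverse_of_injective (LinearMap.ker_eq_bot.mpr h)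
  refine ⟨LinearMap.toMatrix' g, ?_⟩
  rw [← LinearMap.toMatrix'_toLin' M, ← LinearMap.toMatrix'_comp, Matrix.toLin'_apply', hg,
    LinearMap.toMatrix'_id]

theorem exists_mul_eq_one_of_vecMul_injective [Fintype m] [Fintype n] [DecidableEq m]
    {M : Matrix m n K} (h : Function.Injective M.vecMul) : ∃ B : Matrix n m K, M * B = 1 := by
  obtain ⟨B, hB⟩ := exists_mul_eq_one_of_mulVec_injective (M := Mᵀ)
    fun v w hvw => h (by simpa only [mulVec_transpose] using hvw)
  exact ⟨Bᵀ, by simpa using congrArg transpose hB⟩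

theorem mul_left_cancel_of_mulVec_injective [Fintype m] [Fintype n] [DecidableEq n]
    {L : Matrix m n K} (hL : Function.Injective L.mulVec) {X Y : Matrix n o K}
    (h : L * X = L * Y) : X = Y := by
  obtain ⟨B, hB⟩ := exists_mul_eq_one_of_mulVec_injective hL
  exact mul_right_injective_of_inv B L hB h

theorem mul_right_cancel_of_vecMul_injective [Fintype m] [Fintype n] [DecidableEq m]
    {R : Matrix m n K} (hR : Function.Injective R.vecMul) {X Y : Matrix o m K}
    (h : X * R = Y * R) : X = Y := by
  obtain ⟨B, hB⟩ := exists_mul_eq_one_of_vecMul_injective hR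
  exact mul_left_injective_of_inv R B hB h

theorem exists_eq_mul_right_of_mul_eq_mul [Fintype m] [Fintype n] [DecidableEq m]
    {L L' : Matrix l m K} {R R' : Matrix m n K} (h : L * R = L' * R')
    (hR : Function.Injective R.vecMul) : ∃ Q : Matrix m m K, L = L' * Q := by
  obtain ⟨B, hB⟩ := exists_mul_eq_one_of_vecMul_injective hR
  exact ⟨R' * B, by rw [← Matrix.mul_assoc, ← h, Matrix.mul_assoc, hB, Matrix.mul_one]⟩

theorem exists_eq_mul_left_of_mul_eq_mul [Fintype l] [Fintype m] [DecidableEq m]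
    {L L' : Matrix l m K} {R R' : Matrix m n K} (h : L * R = L' * R')
    (hL : Function.Injective L.mulVec) : ∃ P : Matrix m m K, R = P * R' := by
  obtain ⟨B, hB⟩ := exists_mul_eq_one_of_mulVec_injective hL
  exact ⟨B * L', by rw [Matrix.mul_assoc, ← h, ← Matrix.mul_assoc, hB, Matrix.one_mul]⟩

theorem isUnit_of_eq_mul_of_mulVec_injective [Fintype n] [DecidableEq n] {L L' : Matrix l n K}
    {Q : Matrix n n K} (h : L = L' * Q) (hL : Function.Injective L.mulVec) : IsUnit Q :=
  (mulVec_injective_iff_isUnit (A := Q)).mp fun v w hvw => hL <| by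
    rw [h, ← mulVec_mulVec, hvw, mulVec_mulVec]

theorem isUnit_of_eq_mul_of_vecMul_injective [Fintype m] [DecidableEq m] {R R' : Matrix m o K}
    {P : Matrix m m K} (h : R = P * R') (hR : Function.Injective R.vecMul) : IsUnit P :=
  (vecMul_injective_iff_isUnit (A := P)).mp fun v w hvw => hR <| by
    simp only [h, ← vecMul_vecMul]
    exact congrArg (· ᵥ* R') hvw

theorem transpose_mul_self_eq_one_of_mul_eq_mul {R ι : Type*} [CommSemiring R] [Fintype ι]
    [Fintype l] [Fintype m] [Fintype o] [DecidableEq m] [DecidableEq n] [DecidableEq o]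
    {Q : Matrix l m R} {Q' : Matrix o n R} {A : ι → Matrix m n R} {B : ι → Matrix l o R}
    (hQ : Qᵀ * Q = 1) (hA : ∑ x, (A x)ᵀ * A x = 1) (hB : ∑ x, (B x)ᵀ * B x = 1)
    (h : ∀ x, Q * A x = B x * Q') : Q'ᵀ * Q' = 1 :=
  calc Q'ᵀ * Q' = Q'ᵀ * (∑ x, (B x)ᵀ * B x) * Q' := by rw [hB, Matrix.mul_one]
    _ = ∑ x, (B x * Q')ᵀ * (B x * Q') := by
      simp only [Matrix.mul_sum, Matrix.sum_mul, transpose_mul, Matrix.mul_assoc]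
    _ = ∑ x, (A x)ᵀ * (Qᵀ * Q) * A x := by
      simp only [← h, transpose_mul, Matrix.mul_assoc]
    _ = 1 := by simp only [hQ, Matrix.mul_one, hA]

end Matrix

namespace TT

section Slice

def slice {p n q : ℕ} (G : Fin p → Fin n → Fin q → ℝ) (x : Fin n) :
    Matrix (Fin p) (Fin q) ℝ :=
  fun a b => G a x b

variable {p n q : ℕ}

theorem transpose_leftUnf_mul_leftUnf (G : Fin p → Fin n → Fin q → ℝ) :
    (leftUnf G)ᵀ * leftUnf G = ∑ x, (slice G x)ᵀ * slice G x := by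
  ext b c
  simp [mul_apply, Matrix.sum_apply, Fintype.sum_prod_type, leftUnf, slice]

theorem rightUnf_mul_transpose_rightUnf (G : Fin p → Fin n → Fin q → ℝ) :
    rightUnf G * (rightUnf G)ᵀ = ∑ x, slice G x * (slice G x)ᵀ := by
  ext b c
  simp [mul_apply, Matrix.sum_apply, Fintype.sum_prod_type, rightUnf, slice]

theorem leftUnf_eq_kronecker_mul_mul {p' q' : ℕ} {G : Fin p → Fin n → Fin q → ℝ}
    {H : Fin p' → Fin n → Fin q' → ℝ} {P : Matrix (Fin p) (Fin p') ℝ}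
    {Q : Matrix (Fin q') (Fin q) ℝ} (h : ∀ x, slice G x = P * slice H x * Q) :
    leftUnf G = kroneckerMap (· * ·) (1 : Matrix (Fin n) (Fin n) ℝ) P * leftUnf H * Q := by
  ext ⟨x, a⟩ c
  rw [show leftUnf G (x, a) c = slice G x a c from rfl, h]
  simp [mul_apply, Fintype.sum_prod_type, one_apply, ite_mul, leftUnf, slice]

theorem rightUnf_eq_mul_mul_kronecker {p' q' : ℕ} {G : Fin p → Fin n → Fin q → ℝ}
    {H : Fin p' → Fin n → Fin q' → ℝ} {P : Matrix (Fin p) (Fin p') ℝ}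
    {Q : Matrix (Fin q') (Fin q) ℝ} (h : ∀ x, slice G x = P * slice H x * Q) :
    rightUnf G = P * rightUnf H * kroneckerMap (· * ·) (1 : Matrix (Fin n) (Fin n) ℝ) Q := by
  ext a ⟨x, c⟩
  rw [show rightUnf G a (x, c) = slice G x a c from rfl, h]
  simp [mul_apply, Fintype.sum_prod_type, one_apply, ite_mul, rightUnf, slice]

theorem leftUnf_eq_of_mul_slice_eq {p' q' : ℕ} {G : Fin p → Fin n → Fin q → ℝ}
    {H : Fin p' → Fin n → Fin q' → ℝ} {Q : Matrix (Fin p') (Fin p) ℝ}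
    {Q' : Matrix (Fin q') (Fin q) ℝ} (hQ : Qᵀ * Q = 1)
    (h : ∀ x, Q * slice G x = slice H x * Q') :
    leftUnf G = kroneckerMap (· * ·) (1 : Matrix (Fin n) (Fin n) ℝ) Qᵀ * leftUnf H * Q' :=
  leftUnf_eq_kronecker_mul_mul fun x => by
    rw [Matrix.mul_assoc, ← h, ← Matrix.mul_assoc, hQ, Matrix.one_mul]

theorem rightUnf_eq_of_slice_mul_eq {p' q' : ℕ} {G : Fin p → Fin n → Fin q → ℝ}
    {H : Fin p' → Fin n → Fin q' → ℝ} {P : Matrix (Fin p) (Fin p') ℝ}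
    {P' : Matrix (Fin q) (Fin q') ℝ} (hP' : P' * P'ᵀ = 1)
    (h : ∀ x, slice G x * P' = P * slice H x) :
    rightUnf G = P * rightUnf H * kroneckerMap (· * ·) (1 : Matrix (Fin n) (Fin n) ℝ) P'ᵀ :=
  rightUnf_eq_mul_mul_kronecker fun x => by
    rw [← h, Matrix.mul_assoc, hP', Matrix.mul_one]

end Slice

theorem colSpace_mul_of_isUnit {γ δ : Type} [Fintype δ] [DecidableEq δ] (M : Matrix γ δ ℝ)
    {Q : Matrix δ δ ℝ} (hQ : IsUnit Q) : colSpace (M * Q) = colSpace M := by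
  rw [colSpace, colSpace, mulVecLin_mul, LinearMap.range_comp_of_range_eq_top]
  exact LinearMap.range_eq_top.mpr (mulVec_surjective_iff_isUnit.mpr hQ)

theorem rowSpace_mul_of_isUnit {γ δ : Type} [Fintype γ] [DecidableEq γ] (M : Matrix γ δ ℝ)
    {P : Matrix γ γ ℝ} (hP : IsUnit P) : rowSpace (P * M) = rowSpace M := by
  rw [rowSpace, rowSpace, transpose_mul]
  exact colSpace_mul_of_isUnit _ ((isUnit_transpose P).mpr hP)

section Chain

variable {R : Type*} [CommSemiring R] {d : ℕ} {κ : Fin (d + 1) → Type*} [∀ s, Fintype (κ s)]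

noncomputable def leftChain (M : ∀ s : Fin d, Matrix (κ s.castSucc) (κ s.succ) R) :
    ∀ s, κ s → R :=
  Fin.induction (fun _ => 1) fun s v => v ᵥ* M s

noncomputable def rightChain (M : ∀ s : Fin d, Matrix (κ s.castSucc) (κ s.succ) R) :
    ∀ s, κ s → R :=
  Fin.reverseInduction (fun _ => 1) fun s v => M s *ᵥ v

theorem leftChain_castSucc {κ : Fin (d + 2) → Type*} [∀ s, Fintype (κ s)]
    (M : ∀ s : Fin (d + 1), Matrix (κ s.castSucc) (κ s.succ) R) (s : Fin (d + 1)) :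
    leftChain M s.castSucc =
      leftChain (κ := fun s => κ s.castSucc) (fun s => M s.castSucc) s := by
  induction s using Fin.induction with
  | zero => rfl
  | succ s ih => exact congrArg (· ᵥ* M s.castSucc) ih

variable (M : ∀ s : Fin d, Matrix (κ s.castSucc) (κ s.succ) R)

theorem leftChain_succ (s : Fin d) : leftChain M s.succ = leftChain M s.castSucc ᵥ* M s := rfl

theorem rightChain_last : rightChain M (Fin.last d) = 1 :=
  Fin.reverseInduction_last

theorem rightChain_castSucc (s : Fin d) :
    rightChain M s.castSucc = M s *ᵥ rightChain M s.succ :=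
  Fin.reverseInduction_castSucc s

theorem leftChain_congr {M' : ∀ s : Fin d, Matrix (κ s.castSucc) (κ s.succ) R}
    (s : Fin (d + 1)) (h : ∀ j : Fin d, j.val < s.val → M j = M' j) :
    leftChain M s = leftChain M' s := by
  induction s using Fin.induction with
  | zero => rfl
  | succ s ih =>
    rw [leftChain_succ, leftChain_succ, h s s.castSucc_lt_succ,
      ih fun j hj => h j (hj.trans s.castSucc_lt_succ)]

theorem rightChain_congr {M' : ∀ s : Fin d, Matrix (κ s.castSucc) (κ s.succ) R}
    (s : Fin (d + 1)) (h : ∀ j : Fin d, s.val ≤ j.val → M j = M' j) :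
    rightChain M s = rightChain M' s := by
  induction s using Fin.reverseInduction with
  | last => rw [rightChain_last, rightChain_last]
  | cast s ih =>
    rw [rightChain_castSucc, rightChain_castSucc, h s le_rfl,
      ih fun j hj => h j (Nat.le_of_succ_le hj)]

theorem sum_prod_mul_eq_leftChain_dotProduct (w : κ (Fin.last d) → R) :
    ∑ α : ∀ s, κ s, (∏ s, M s (α s.castSucc) (α s.succ)) * w (α (Fin.last d)) =
      leftChain M (Fin.last d) ⬝ᵥ w := by
  induction d with
  | zero =>
    rw [← (Fin.consEquiv κ).sum_comp, Fintype.sum_prod_type]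
    simp [leftChain, dotProduct]
  | succ d ih =>
    rw [← (Fin.snocEquiv κ).sum_comp, Fintype.sum_prod_type, Finset.sum_comm]
    simp only [Fin.prod_univ_castSucc, Fin.snocEquiv_apply, Fin.succ_castSucc, Fin.succ_last,
      Fin.snoc_castSucc, Fin.snoc_last, mul_assoc, ← Finset.mul_sum]
    refine (ih (κ := fun s => κ s.castSucc) (fun s => M s.castSucc) (M (Fin.last d) *ᵥ w)).trans
      ?_
    rw [dotProduct_mulVec, ← leftChain_castSucc]
    rfl

theorem leftChain_dotProduct_rightChain (s : Fin (d + 1)) :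
    leftChain M s ⬝ᵥ rightChain M s =
      ∑ α : ∀ s, κ s, ∏ s, M s (α s.castSucc) (α s.succ) := by
  induction s using Fin.reverseInduction with
  | last => simpa [rightChain_last] using (sum_prod_mul_eq_leftChain_dotProduct M 1).symm
  | cast s ih => rw [rightChain_castSucc, dotProduct_mulVec, ← leftChain_succ, ih]

end Chain

section Interface

variable {d : ℕ} {n : Fin d → ℕ} {ρ : Fin (d + 1) → ℕ}

abbrev MultiIndex (n : Fin d → ℕ) : Type := ∀ s : Fin d, Fin (n s)

abbrev Cores (n : Fin d → ℕ) (ρ : Fin (d + 1) → ℕ) : Type :=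
  ∀ s : Fin d, Fin (ρ s.castSucc) → Fin (n s) → Fin (ρ s.succ) → ℝ

def slices (G : Cores n ρ) (i : MultiIndex n) (s : Fin d) :
    Matrix (Fin (ρ s.castSucc)) (Fin (ρ s.succ)) ℝ :=
  slice (G s) (i s)

/- `leftInterface G s` is the paper's `G_{≤s}` and `rightInterface G s` its `G_{>s}`. Both are
indexed by full multi-indices, of which they only read the coordinates `< s`, resp. `≥ s`. -/
noncomputable def leftInterface (G : Cores n ρ) (s : Fin (d + 1)) :
    Matrix (MultiIndex n) (Fin (ρ s)) ℝ :=
  fun i => leftChain (κ := fun s => Fin (ρ s)) (slices G i) s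

noncomputable def rightInterface (G : Cores n ρ) (s : Fin (d + 1)) :
    Matrix (Fin (ρ s)) (MultiIndex n) ℝ :=
  fun β i => rightChain (κ := fun s => Fin (ρ s)) (slices G i) s β

variable (G : Cores n ρ)

theorem leftInterface_congr {s : Fin (d + 1)} {i i' : MultiIndex n}
    (h : ∀ j : Fin d, j.val < s.val → i j = i' j) :
    leftInterface G s i = leftInterface G s i' :=
  leftChain_congr _ s fun j hj => by rw [slices, slices, h j hj]

theorem rightInterface_congr {s : Fin (d + 1)} {i i' : MultiIndex n}
    (h : ∀ j : Fin d, s.val ≤ j.val → i j = i' j) (β : Fin (ρ s)) :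
    rightInterface G s β i = rightInterface G s β i' :=
  congrFun (rightChain_congr (κ := fun s => Fin (ρ s)) _ s fun j hj => by
    rw [slices, slices, h j hj]) β

/- The left side is the entry `(i_{<s}, j_{≥s})` of the `s`-th unfolding of the tensor. -/
theorem ttEval_eq_leftInterface_mul_rightInterface (s : Fin (d + 1)) (i j : MultiIndex n) :
    ttEval n ρ G (fun k => if k.val < s.val then i k else j k) =
      (leftInterface G s * rightInterface G s) i j := by
  rw [mul_apply', ttEval]
  refine (leftChain_dotProduct_rightChain (κ := fun s => Fin (ρ s)) (slices G _) s).symm.trans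
    (congrArg₂ _ ?_ (funext ?_))
  · exact leftInterface_congr G fun k hk => by simp [hk]
  · exact rightInterface_congr G fun k hk => by simp [not_lt.mpr hk]

theorem leftInterface_mul_rightInterface_eq {G H : Cores n ρ} (h : ttEval n ρ G = ttEval n ρ H)
    (s : Fin (d + 1)) :
    leftInterface G s * rightInterface G s = leftInterface H s * rightInterface H s := by
  ext i j
  rw [← ttEval_eq_leftInterface_mul_rightInterface, h, ttEval_eq_leftInterface_mul_rightInterface]

theorem rightInterface_last : rightInterface G (Fin.last d) = of fun _ _ => 1 := by
  ext β i
  simp [rightInterface, rightChain_last]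

theorem leftInterface_mul_slice (s : Fin d) (x : Fin (n s)) :
    leftInterface G s.castSucc * slice (G s) x =
      (leftInterface G s.succ).submatrix (Function.update · s x) id := by
  ext i α
  have h := leftInterface_congr G (s := s.castSucc) (i := i) (i' := Function.update i s x)
    fun j (hj : j < s) => (Function.update_of_ne hj.ne _ _).symm
  rw [mul_apply_eq_vecMul, h]
  simp [leftInterface, leftChain_succ, slices]

theorem slice_mul_rightInterface (s : Fin d) (x : Fin (n s)) :
    slice (G s) x * rightInterface G s.succ =
      (rightInterface G s.castSucc).submatrix id (Function.update · s x) := by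
  ext β i
  have h := rightInterface_congr G (s := s.succ) (i := i) (i' := Function.update i s x)
    fun j (hj : s < j) => (Function.update_of_ne hj.ne' _ _).symm
  simp only [mul_apply', h]
  simp [rightInterface, rightChain_castSucc, slices, mulVec]

end Interface

section Minimal

variable {d : ℕ} {n : Fin d → ℕ} {ρ : Fin (d + 1) → ℕ} {G : Cores n ρ}

theorem MinimalTT.nonempty_multiIndex (hG : MinimalTT G) (hρ0 : ρ 0 = 1) :
    Nonempty (MultiIndex n) := by
  have step (s : Fin d) (hs : 0 < ρ s.castSucc) : 0 < n s ∧ 0 < ρ s.succ := by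
    have := (hG s).2 ▸ rank_le_card_width (rightUnf (G s))
    rw [Fintype.card_prod, Fintype.card_fin, Fintype.card_fin] at this
    exact CanonicallyOrderedAdd.mul_pos.mp (hs.trans_le this)
  have hρ (s : Fin (d + 1)) : 0 < ρ s := by
    induction s using Fin.induction with
    | zero => omega
    | succ s ih => exact (step s ih).2
  exact ⟨fun s => ⟨0, (step s (hρ _)).1⟩⟩

variable [Nonempty (MultiIndex n)]

theorem leftInterface_mulVec_injective (hG : MinimalTT G) (hρ0 : ρ 0 = 1) (s : Fin (d + 1)) :
    Function.Injective (leftInterface G s).mulVec := by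
  induction s using Fin.induction with
  | zero =>
    intro v w h
    have : Subsingleton (Fin (ρ 0)) := by rw [hρ0]; infer_instance
    obtain ⟨i⟩ := ‹Nonempty (MultiIndex n)›
    funext β
    simpa [leftInterface, leftChain, mulVec, dotProduct, Fintype.sum_subsingleton _ β]
      using congrFun h i
  | succ s ih =>
    intro v w h
    have hslice (x : Fin (n s)) : slice (G s) x *ᵥ v = slice (G s) x *ᵥ w := ih <| by
      rw [mulVec_mulVec, mulVec_mulVec, leftInterface_mul_slice]
      exact congrArg (fun u i => u (Function.update i s x)) h
    refine mulVec_injective_of_rank_eq (by rw [(hG s).1, Fintype.card_fin]) (funext ?_)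
    rintro ⟨x, a⟩
    exact congrFun (hslice x) a

theorem rightInterface_vecMul_injective (hG : MinimalTT G) (hρd : ρ (Fin.last d) = 1)
    (s : Fin (d + 1)) : Function.Injective (rightInterface G s).vecMul := by
  induction s using Fin.reverseInduction with
  | last =>
    intro v w h
    have : Subsingleton (Fin (ρ (Fin.last d))) := by rw [hρd]; infer_instance
    obtain ⟨i⟩ := ‹Nonempty (MultiIndex n)›
    funext β
    simpa [rightInterface_last, vecMul, dotProduct, Fintype.sum_subsingleton _ β]
      using congrFun h i
  | cast s ih =>
    intro v w h
    have hslice (x : Fin (n s)) : v ᵥ* slice (G s) x = w ᵥ* slice (G s) x := ih <| by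
      simp only [vecMul_vecMul, slice_mul_rightInterface]
      exact congrArg (fun u i => u (Function.update i s x)) h
    refine vecMul_injective_of_rank_eq (by rw [(hG s).2, Fintype.card_fin]) (funext ?_)
    rintro ⟨x, a⟩
    exact congrFun (hslice x) a

end Minimal

section Gauge

variable {d : ℕ} {n : Fin d → ℕ} {ρ : Fin (d + 1) → ℕ} {G H : Cores n ρ}

theorem exists_left_gauge (hρ0 : ρ 0 = 1) (hρd : ρ (Fin.last d) = 1)
    (hGH : ttEval n ρ G = ttEval n ρ H) (hG : MinimalTT G) (hH : MinimalTT H) :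
    ∃ Q : ∀ s, Matrix (Fin (ρ s)) (Fin (ρ s)) ℝ, Q 0 = 1 ∧ Q (Fin.last d) = 1 ∧
      (∀ s, IsUnit (Q s)) ∧
      ∀ s x, Q s.castSucc * slice (G s) x = slice (H s) x * Q s.succ := by
  have := hG.nonempty_multiIndex hρ0
  have hLH := leftInterface_mulVec_injective hH hρ0
  have hRH := rightInterface_vecMul_injective hH hρd
  have hLR := leftInterface_mul_rightInterface_eq hGH
  choose Q hQ using fun s =>
    exists_eq_mul_right_of_mul_eq_mul (hLR s) (rightInterface_vecMul_injective hG hρd s)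
  have hQ_eq_one {s} (h : leftInterface G s = leftInterface H s) : Q s = 1 :=
    mul_left_cancel_of_mulVec_injective (hLH s) (by rw [← hQ, h, Matrix.mul_one])
  -- `leftInterface _ 0` is the all-ones column and `rightInterface _ (last d)` the all-ones row
  -- for every factorization.
  refine ⟨Q, hQ_eq_one rfl, hQ_eq_one ?_, fun s =>
    isUnit_of_eq_mul_of_mulVec_injective (hQ s) (leftInterface_mulVec_injective hG hρ0 s),
    fun s x => mul_left_cancel_of_mulVec_injective (hLH s.castSucc) ?_⟩
  · refine mul_right_cancel_of_vecMul_injective (hRH _) ?_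
    simpa only [rightInterface_last] using hLR (Fin.last d)
  · calc leftInterface H s.castSucc * (Q s.castSucc * slice (G s) x)
        = (leftInterface G s.succ).submatrix (Function.update · s x) id := by
          rw [← Matrix.mul_assoc, ← hQ, leftInterface_mul_slice]
      _ = (leftInterface H s.succ).submatrix (Function.update · s x) id * Q s.succ := by
          rw [hQ, submatrix_mul _ _ _ id _ Function.bijective_id, submatrix_id_id]
      _ = leftInterface H s.castSucc * (slice (H s) x * Q s.succ) := by
          rw [← leftInterface_mul_slice, Matrix.mul_assoc]

theorem exists_right_gauge (hρ0 : ρ 0 = 1) (hρd : ρ (Fin.last d) = 1)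
    (hGH : ttEval n ρ G = ttEval n ρ H) (hG : MinimalTT G) (hH : MinimalTT H) :
    ∃ P : ∀ s, Matrix (Fin (ρ s)) (Fin (ρ s)) ℝ, P 0 = 1 ∧ P (Fin.last d) = 1 ∧
      (∀ s, IsUnit (P s)) ∧
      ∀ s x, slice (G s) x * P s.succ = P s.castSucc * slice (H s) x := by
  have := hG.nonempty_multiIndex hρ0
  have hLH := leftInterface_mulVec_injective hH hρ0
  have hRH := rightInterface_vecMul_injective hH hρd
  have hLR := leftInterface_mul_rightInterface_eq hGH
  choose P hP using fun s =>
    exists_eq_mul_left_of_mul_eq_mul (hLR s) (leftInterface_mulVec_injective hG hρ0 s)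
  have hP_eq_one {s} (h : rightInterface G s = rightInterface H s) : P s = 1 :=
    mul_right_cancel_of_vecMul_injective (hRH s) (by rw [← hP, h, Matrix.one_mul])
  refine ⟨P, hP_eq_one ?_, hP_eq_one (by rw [rightInterface_last, rightInterface_last]),
    fun s => isUnit_of_eq_mul_of_vecMul_injective (hP s)
      (rightInterface_vecMul_injective hG hρd s),
    fun s x => mul_right_cancel_of_vecMul_injective (hRH s.succ) ?_⟩
  · exact mul_left_cancel_of_mulVec_injective (hLH 0) (hLR 0)
  · calc slice (G s) x * P s.succ * rightInterface H s.succ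
        = (rightInterface G s.castSucc).submatrix id (Function.update · s x) := by
          rw [Matrix.mul_assoc, ← hP, slice_mul_rightInterface]
      _ = P s.castSucc * (rightInterface H s.castSucc).submatrix id (Function.update · s x) := by
          rw [hP, submatrix_mul _ _ id id _ Function.bijective_id, submatrix_id_id]
      _ = P s.castSucc * slice (H s) x * rightInterface H s.succ := by
          rw [← slice_mul_rightInterface, Matrix.mul_assoc]

theorem transpose_mul_self_eq_one_of_left_gauge {Q : ∀ s, Matrix (Fin (ρ s)) (Fin (ρ s)) ℝ}
    (hQ0 : Q 0 = 1) (hQ : ∀ s x, Q s.castSucc * slice (G s) x = slice (H s) x * Q s.succ)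
    (s : Fin (d + 1)) (hG : ∀ j : Fin d, j.val < s.val → LeftOrth (G j))
    (hH : ∀ j : Fin d, j.val < s.val → LeftOrth (H j)) : (Q s)ᵀ * Q s = 1 := by
  induction s using Fin.induction with
  | zero => simp [hQ0]
  | succ s ih =>
    have hs : s.val < s.succ.val := Nat.lt_succ_self _
    refine transpose_mul_self_eq_one_of_mul_eq_mul
      (ih (fun j hj => hG j (hj.trans hs)) (fun j hj => hH j (hj.trans hs))) ?_ ?_ (hQ s)
    · rw [← transpose_leftUnf_mul_leftUnf]; exact hG s hs
    · rw [← transpose_leftUnf_mul_leftUnf]; exact hH s hs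

theorem mul_transpose_self_eq_one_of_right_gauge {P : ∀ s, Matrix (Fin (ρ s)) (Fin (ρ s)) ℝ}
    (hPd : P (Fin.last d) = 1)
    (hP : ∀ s x, slice (G s) x * P s.succ = P s.castSucc * slice (H s) x)
    (s : Fin (d + 1)) (hG : ∀ j : Fin d, s.val ≤ j.val → RightOrth (G j))
    (hH : ∀ j : Fin d, s.val ≤ j.val → RightOrth (H j)) : P s * (P s)ᵀ = 1 := by
  induction s using Fin.reverseInduction with
  | last => simp [hPd]
  | cast s ih =>
    have hs : s.castSucc.val ≤ s.val := le_rfl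
    have hle : s.castSucc.val ≤ s.succ.val := Nat.le_succ _
    simpa using transpose_mul_self_eq_one_of_mul_eq_mul (Q := (P s.succ)ᵀ)
      (Q' := (P s.castSucc)ᵀ) (A := fun x => (slice (G s) x)ᵀ)
      (B := fun x => (slice (H s) x)ᵀ)
      (by simpa using ih (fun j hj => hG j (hle.trans hj)) (fun j hj => hH j (hle.trans hj)))
      (by simp only [transpose_transpose, ← rightUnf_mul_transpose_rightUnf]; exact hG s hs)
      (by simp only [transpose_transpose, ← rightUnf_mul_transpose_rightUnf]; exact hH s hs)
      (fun x => by rw [← transpose_mul, ← transpose_mul, hP])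

end Gauge

/-- `tf : Fin d` is the 0-based position of the paper's 1-based index `t`. -/
theorem minimal_t_orthogonal_equivalence_general (d : ℕ) (n : Fin d → ℕ)
    (ρ : Fin (d + 1) → ℕ) (hρ0 : ρ 0 = 1) (hρd : ρ (Fin.last d) = 1)
    (A : (∀ s : Fin d, Fin (n s)) → ℝ)
    (U V T : ∀ s : Fin d, Fin (ρ s.castSucc) → Fin (n s) → Fin (ρ s.succ) → ℝ)
    (t : ℕ) (ht1 : 1 ≤ t) (htd : t ≤ d)
    (hUA : ttEval n ρ U = A) (hVA : ttEval n ρ V = A) (hTA : ttEval n ρ T = A)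
    (hUmin : MinimalTT U) (hVmin : MinimalTT V) (hTmin : MinimalTT T)
    (hUorth : TOrth d U) (hVorth : TOrth 1 V) (hTorth : TOrth t T) :
    ∃ Q : ∀ s : Fin (d + 1), Matrix (Fin (ρ s)) (Fin (ρ s)) ℝ,
      (∀ s, (Q s)ᵀ * Q s = 1 ∧ Q s * (Q s)ᵀ = 1) ∧
      Q 0 = 1 ∧ Q (Fin.last d) = 1 ∧
      (∀ s : Fin d, s.val + 2 ≤ t →
        leftUnf (T s) =
          kroneckerMap (· * ·) (1 : Matrix (Fin (n s)) (Fin (n s)) ℝ) (Q s.castSucc)ᵀ *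
            leftUnf (U s) * Q s.succ) ∧
      (∀ s : Fin d, t ≤ s.val →
        rightUnf (T s) =
          (Q s.castSucc)ᵀ * rightUnf (V s) *
            kroneckerMap (· * ·) (1 : Matrix (Fin (n s)) (Fin (n s)) ℝ) (Q s.succ)) ∧
      (∀ tf : Fin d, tf.val + 1 = t →
        (t = d →
          leftUnf (T tf) =
            kroneckerMap (· * ·) (1 : Matrix (Fin (n tf)) (Fin (n tf)) ℝ) (Q tf.castSucc)ᵀ *
              leftUnf (U tf)) ∧
        (t = 1 →
          rightUnf (T tf) =
            rightUnf (V tf) *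
              kroneckerMap (· * ·) (1 : Matrix (Fin (n tf)) (Fin (n tf)) ℝ) (Q tf.succ)) ∧
        (1 < t → t < d →
          colSpace (leftUnf (T tf)) =
            colSpace
              (kroneckerMap (· * ·) (1 : Matrix (Fin (n tf)) (Fin (n tf)) ℝ) (Q tf.castSucc)ᵀ *
                leftUnf (U tf)) ∧
          rowSpace (rightUnf (T tf)) =
            rowSpace
              (rightUnf (V tf) *
                kroneckerMap (· * ·) (1 : Matrix (Fin (n tf)) (Fin (n tf)) ℝ) (Q tf.succ)))) := by
  obtain ⟨QL, hQL0, hQLd, hQLunit, hQL⟩ :=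
    exists_left_gauge hρ0 hρd (hTA.trans hUA.symm) hTmin hUmin
  obtain ⟨QR, hQR0, hQRd, hQRunit, hQR⟩ :=
    exists_right_gauge hρ0 hρd (hTA.trans hVA.symm) hTmin hVmin
  have hQLorth (s : Fin (d + 1)) (hs : s.val < t) : (QL s)ᵀ * QL s = 1 :=
    transpose_mul_self_eq_one_of_left_gauge hQL0 hQL s
      (fun j hj => hTorth.1 j (by omega)) (fun j hj => hUorth.1 j (by omega))
  have hQRorth (s : Fin (d + 1)) (hs : t ≤ s.val) : QR s * (QR s)ᵀ = 1 :=
    mul_transpose_self_eq_one_of_right_gauge hQRd hQR s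
      (fun j hj => hTorth.2 j (by omega)) (fun j hj => hVorth.2 j (by omega))
  have hleft (s : Fin d) (hs : s.val < t) := leftUnf_eq_of_mul_slice_eq (hQLorth _ hs) (hQL s)
  have hright (s : Fin d) (hs : t ≤ s.val + 1) :=
    rightUnf_eq_of_slice_mul_eq (hQRorth _ hs) (hQR s)
  refine ⟨fun s => if s.val < t then QL s else (QR s)ᵀ, fun s => ?_, by simp [hQL0, hQR0],
    by simp [htd, hQRd], fun s hs => ?_, fun s hs => ?_, fun tf htf => ⟨fun htd' => ?_,
    fun ht1' => ?_, fun h1 h2 => ⟨?_, ?_⟩⟩⟩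
  · dsimp only
    split_ifs with hs
    · exact ⟨hQLorth s hs, mul_eq_one_comm.mp (hQLorth s hs)⟩
    · rw [transpose_transpose]
      exact ⟨hQRorth s (not_lt.mp hs), mul_eq_one_comm.mp (hQRorth s (not_lt.mp hs))⟩
  · simpa [show s.val < t by omega, show s.val + 1 < t by omega] using hleft s (by omega)
  · simpa [show ¬ s.val < t by omega, show ¬ s.val + 1 < t by omega] using hright s (by omega)
  · have hlast : QL tf.succ = 1 :=
      (Fin.ext (by simp; omega) : Fin.last d = tf.succ) ▸ hQLd
    simpa [show tf.val < t by omega, hlast] using hleft tf (by omega)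
  · have hzero : QR tf.castSucc = 1 :=
      (Fin.ext (by simp; omega) : 0 = tf.castSucc) ▸ hQR0
    simpa [show ¬ tf.val + 1 < t by omega, hzero] using hright tf (by omega)
  · rw [hleft tf (by omega)]
    simpa [show tf.val < t by omega] using colSpace_mul_of_isUnit _ (hQLunit tf.succ)
  · rw [hright tf (by omega), Matrix.mul_assoc]
    simpa [show ¬ tf.val + 1 < t by omega] using
      rowSpace_mul_of_isUnit _ (hQRunit tf.castSucc)

/-- Equivalence of minimal `t`-orthogonal TT factorizations: any minimal `t`-orthogonal
factorization `{T_s}` is obtained from a minimal left-orthogonal `{U_s}` and a minimal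
right-orthogonal `{V_s}` factorization by orthogonal transformations `{Q_s}`.
(The index `tf : Fin d` is the 0-based position of the paper's 1-based index `t`.) -/
theorem minimal_t_orthogonal_equivalence (d : ℕ) (hd : 2 ≤ d) (n : Fin d → ℕ)
    (ρ : Fin (d + 1) → ℕ) (hρ0 : ρ 0 = 1) (hρd : ρ (Fin.last d) = 1)
    (A : (∀ s : Fin d, Fin (n s)) → ℝ)
    (U V T : ∀ s : Fin d, Fin (ρ s.castSucc) → Fin (n s) → Fin (ρ s.succ) → ℝ)
    (t : ℕ) (ht1 : 1 ≤ t) (htd : t ≤ d)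
    (hUA : ttEval n ρ U = A) (hVA : ttEval n ρ V = A) (hTA : ttEval n ρ T = A)
    (hUmin : MinimalTT U) (hVmin : MinimalTT V) (hTmin : MinimalTT T)
    (hUorth : TOrth d U) (hVorth : TOrth 1 V) (hTorth : TOrth t T) :
    ∃ Q : ∀ s : Fin (d + 1), Matrix (Fin (ρ s)) (Fin (ρ s)) ℝ,
      (∀ s, (Q s)ᵀ * Q s = 1 ∧ Q s * (Q s)ᵀ = 1) ∧
      Q 0 = 1 ∧ Q (Fin.last d) = 1 ∧
      (∀ s : Fin d, s.val + 2 ≤ t →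
        leftUnf (T s) =
          kroneckerMap (· * ·) (1 : Matrix (Fin (n s)) (Fin (n s)) ℝ) (Q s.castSucc)ᵀ *
            leftUnf (U s) * Q s.succ) ∧
      (∀ s : Fin d, t ≤ s.val →
        rightUnf (T s) =
          (Q s.castSucc)ᵀ * rightUnf (V s) *
            kroneckerMap (· * ·) (1 : Matrix (Fin (n s)) (Fin (n s)) ℝ) (Q s.succ)) ∧
      (∀ tf : Fin d, tf.val + 1 = t →
        (t = d →
          leftUnf (T tf) =
            kroneckerMap (· * ·) (1 : Matrix (Fin (n tf)) (Fin (n tf)) ℝ) (Q tf.castSucc)ᵀ *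
              leftUnf (U tf)) ∧
        (t = 1 →
          rightUnf (T tf) =
            rightUnf (V tf) *
              kroneckerMap (· * ·) (1 : Matrix (Fin (n tf)) (Fin (n tf)) ℝ) (Q tf.succ)) ∧
        (1 < t → t < d →
          colSpace (leftUnf (T tf)) =
            colSpace
              (kroneckerMap (· * ·) (1 : Matrix (Fin (n tf)) (Fin (n tf)) ℝ) (Q tf.castSucc)ᵀ *
                leftUnf (U tf)) ∧
          rowSpace (rightUnf (T tf)) =
            rowSpace
              (rightUnf (V tf) *
                kroneckerMap (· * ·) (1 : Matrix (Fin (n tf)) (Fin (n tf)) ℝ) (Q tf.succ)))) :=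
  minimal_t_orthogonal_equivalence_general d n ρ hρ0 hρd A U V T t ht1 htd hUA hVA hTA hUmin hVmin
    hTmin hUorth hVorth hTorth

end TT
end
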